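/- arXiv:1307.1288 — 5 statements merged into one kernel-verified Lean document; each statement's English description precedes it below -/
import Mathlib

section
/- Let V : [0,∞) → ℝ be a right-continuous function with left limits, of finite variation on every compact interval, with canonical decomposition V = V^c + V^d into its continuous part V^c and pure-jump part V^d. Let f : ℝ → ℝ be of class C¹. Then for every t > 0, f(V(t)) − f(V(0)) = ∫_0^t f'(V(s)) V^c(ds) + Σ_{0<s≤t} ( f(V(s)) − f(V(s−)) ), where the sum is absolutely convergent. -/
/-!
When `V` has finitely many jumps it is `Vc` plus a step function. Between two consecutive jumps
the formula is the chain rule for the continuous integrator `Vc`, which follows from the mean value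
theorem on fine partitions; at a jump the integral sees nothing, because `μc` has no atoms
(`Vc` is continuous), and the jump term `f (V s) - f (V s-)` accounts for the increment.
A general `V` is the pointwise limit of such approximants built from finitely many of its
absolutely summable jumps: the integrals converge by dominated convergence and the jump sums
by Tannery's theorem, both dominated through a Lipschitz bound for `f` on a compact range.
-/

open MeasureTheory Set Filter
open scoped ENNReal NNReal

noncomputable section

/-- The integral `∫_A f dμ` of `f` against a signed measure `μ`, defined through the
Jordan decomposition `μ = μ⁺ - μ⁻`. -/
def signedIntegral {Ω : Type*} [MeasurableSpace Ω] (μ : MeasureTheory.SignedMeasure Ω)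
    (A : Set Ω) (f : Ω → ℝ) : ℝ :=
  ∫ ω in A, f ω ∂μ.toJordanDecomposition.posPart -
    ∫ ω in A, f ω ∂μ.toJordanDecomposition.negPart

open Topology

section SignedIntegral

variable {Ω : Type*} [MeasurableSpace Ω] {μ : SignedMeasure Ω} {A B : Set Ω} {g h : Ω → ℝ}

theorem MeasureTheory.SignedMeasure.posPart_le_totalVariation (μ : SignedMeasure Ω) :
    μ.toJordanDecomposition.posPart ≤ μ.totalVariation :=
  Measure.le_add_right le_rfl

theorem MeasureTheory.SignedMeasure.negPart_le_totalVariation (μ : SignedMeasure Ω) :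
    μ.toJordanDecomposition.negPart ≤ μ.totalVariation :=
  Measure.le_add_left le_rfl

theorem MeasureTheory.SignedMeasure.totalVariation_singleton_eq_zero
    [MeasurableSingletonClass Ω] {x : Ω} (hx : μ {x} = 0) : μ.totalVariation {x} = 0 := by
  set P := μ.toJordanDecomposition.posPart
  set N := μ.toJordanDecomposition.negPart
  have hPN : P.real {x} = N.real {x} := by
    linarith [μ.apply_eq_posPart_real_sub_negPart_real (measurableSet_singleton x)]
  obtain ⟨S, -, hPS, hNS⟩ := μ.toJordanDecomposition.mutuallySingular
  have hone : P {x} = 0 ∨ N {x} = 0 := by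
    by_cases hxS : x ∈ S
    · exact .inl (measure_mono_null (singleton_subset_iff.2 hxS) hPS)
    · exact .inr (measure_mono_null (singleton_subset_iff.2 hxS) hNS)
  have hboth : P {x} = 0 ∧ N {x} = 0 := by
    rcases hone with h | h
    · refine ⟨h, (measureReal_eq_zero_iff (measure_ne_top _ _)).1 ?_⟩
      rw [← hPN, measureReal_def, h, ENNReal.toReal_zero]
    · refine ⟨(measureReal_eq_zero_iff (measure_ne_top _ _)).1 ?_, h⟩
      rw [hPN, measureReal_def, h, ENNReal.toReal_zero]
  simp [SignedMeasure.totalVariation, P, N, hboth.1, hboth.2]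

@[simp]
theorem signedIntegral_empty : signedIntegral μ ∅ g = 0 := by
  simp [signedIntegral]

theorem signedIntegral_const (hA : MeasurableSet A) (c : ℝ) :
    signedIntegral μ A (fun _ => c) = c * μ A := by
  simp only [signedIntegral, setIntegral_const, smul_eq_mul,
    μ.apply_eq_posPart_real_sub_negPart_real hA]
  ring

theorem signedIntegral_union (hAB : Disjoint A B) (hB : MeasurableSet B)
    (hg : IntegrableOn g (A ∪ B) μ.totalVariation) :
    signedIntegral μ (A ∪ B) g = signedIntegral μ A g + signedIntegral μ B g := by
  have hP := hg.mono_measure μ.posPart_le_totalVariation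
  have hN := hg.mono_measure μ.negPart_le_totalVariation
  simp only [signedIntegral]
  rw [setIntegral_union hAB hB hP.left_of_union hP.right_of_union,
    setIntegral_union hAB hB hN.left_of_union hN.right_of_union]
  ring

theorem signedIntegral_sub (hg : IntegrableOn g A μ.totalVariation)
    (hh : IntegrableOn h A μ.totalVariation) :
    signedIntegral μ A g - signedIntegral μ A h = signedIntegral μ A (fun x => g x - h x) := by
  simp only [signedIntegral]
  rw [integral_sub (hg.mono_measure μ.posPart_le_totalVariation)
      (hh.mono_measure μ.posPart_le_totalVariation),
    integral_sub (hg.mono_measure μ.negPart_le_totalVariation)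
      (hh.mono_measure μ.negPart_le_totalVariation)]
  ring

theorem abs_signedIntegral_le {C : ℝ} (hC : ∀ x ∈ A, |g x| ≤ C) :
    |signedIntegral μ A g| ≤ C * μ.totalVariation.real A := by
  have hP := norm_setIntegral_le_of_norm_le_const (μ := μ.toJordanDecomposition.posPart)
    (measure_lt_top _ A) (f := g) (by simpa only [Real.norm_eq_abs] using hC)
  have hN := norm_setIntegral_le_of_norm_le_const (μ := μ.toJordanDecomposition.negPart)
    (measure_lt_top _ A) (f := g) (by simpa only [Real.norm_eq_abs] using hC)
  rw [Real.norm_eq_abs] at hP hN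
  calc |signedIntegral μ A g| ≤ C * μ.toJordanDecomposition.posPart.real A
        + C * μ.toJordanDecomposition.negPart.real A := (abs_sub _ _).trans (add_le_add hP hN)
    _ = C * μ.totalVariation.real A := by
      rw [SignedMeasure.totalVariation, measureReal_add_apply]; ring

theorem signedIntegral_congr_ae (hA : MeasurableSet A)
    (hgh : ∀ᵐ x ∂μ.totalVariation, x ∈ A → g x = h x) :
    signedIntegral μ A g = signedIntegral μ A h := by
  simp only [signedIntegral]
  rw [setIntegral_congr_ae hA (ae_mono μ.posPart_le_totalVariation hgh),
    setIntegral_congr_ae hA (ae_mono μ.negPart_le_totalVariation hgh)]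

theorem tendsto_signedIntegral_of_dominated_convergence {G : ℕ → Ω → ℝ} {C : ℝ}
    (hA : MeasurableSet A) (hG : ∀ n, AEStronglyMeasurable (G n) (μ.totalVariation.restrict A))
    (hbound : ∀ n, ∀ x ∈ A, |G n x| ≤ C) (hlim : ∀ x ∈ A, Tendsto (G · x) atTop (𝓝 (g x))) :
    Tendsto (fun n => signedIntegral μ A (G n)) atTop (𝓝 (signedIntegral μ A g)) := by
  have key : ∀ ν : Measure Ω, ν ≤ μ.totalVariation →
      Tendsto (fun n => ∫ x in A, G n x ∂ν) atTop (𝓝 (∫ x in A, g x ∂ν)) := fun ν hν =>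
    tendsto_integral_of_dominated_convergence (fun _ => C)
      (fun n => (hG n).mono_measure (Measure.restrict_mono subset_rfl hν))
      ((integrable_const C).mono_measure (Measure.restrict_mono subset_rfl hν))
      (fun n => (ae_restrict_iff' hA).2 (.of_forall (hbound n)))
      ((ae_restrict_iff' hA).2 (.of_forall hlim))
  exact (key _ μ.posPart_le_totalVariation).sub (key _ μ.negPart_le_totalVariation)

end SignedIntegral

theorem eq_of_forall_abs_sub_le_mul_measureReal {Φ : ℝ → ℝ} (ν : Measure ℝ)
    [IsFiniteMeasure ν] {a b : ℝ} (hab : a ≤ b)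
    (hΦ : ∀ ε > 0, ∃ δ > 0, ∀ u v, a ≤ u → u ≤ v → v ≤ b → v - u < δ →
      |Φ v - Φ u| ≤ ε * ν.real (Ioc u v)) :
    Φ b = Φ a := by
  have hbound : ∀ ε > 0, |Φ b - Φ a| ≤ ε * ν.real (Ioc a b) := by
    intro ε hε
    obtain ⟨δ, hδ, hΦδ⟩ := hΦ ε hε
    obtain ⟨m, hm⟩ := exists_nat_gt ((b - a) / δ)
    have hm0 : (0 : ℝ) < m := (div_nonneg (sub_nonneg.2 hab) hδ.le).trans_lt hm
    set x : ℕ → ℝ := fun i => a + i * ((b - a) / m)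
    have hx : Monotone x := fun i j hij => by
      simp only [x]; gcongr
    have hx0 : x 0 = a := by simp [x]
    have hxm : x m = b := by simp only [x]; rw [mul_div_cancel₀ _ hm0.ne']; ring
    have hxa : ∀ i, a ≤ x i := fun i => by simpa [hx0] using hx (Nat.zero_le i)
    have hxb : ∀ i ≤ m, x i ≤ b := fun i hi => by simpa [hxm] using hx hi
    have hstep : ∀ i, x (i + 1) - x i < δ := fun i => by
      have : x (i + 1) - x i = (b - a) / m := by simp only [x]; push_cast; ring
      rw [this, div_lt_iff₀ hm0]
      rwa [div_lt_iff₀ hδ, mul_comm] at hm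
    have hν : ∀ i, ν.real (Ioc (x i) (x (i + 1))) =
        ν.real (Ioc a (x (i + 1))) - ν.real (Ioc a (x i)) := fun i => by
      rw [← Ioc_union_Ioc_eq_Ioc (hxa i) (hx (Nat.le_succ i)),
        measureReal_union (Ioc_disjoint_Ioc_of_le le_rfl) measurableSet_Ioc]
      ring
    calc |Φ b - Φ a| = |∑ i ∈ Finset.range m, (Φ (x (i + 1)) - Φ (x i))| := by
          rw [Finset.sum_range_sub (fun i => Φ (x i)), hx0, hxm]
      _ ≤ ∑ i ∈ Finset.range m, |Φ (x (i + 1)) - Φ (x i)| := Finset.abs_sum_le_sum_abs _ _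
      _ ≤ ∑ i ∈ Finset.range m, ε * ν.real (Ioc (x i) (x (i + 1))) := by
          refine Finset.sum_le_sum fun i hi => ?_
          have hi := Finset.mem_range.1 hi
          exact hΦδ _ _ (hxa i) (hx (Nat.le_succ i)) (hxb (i + 1) hi) (hstep i)
      _ = ε * ν.real (Ioc a b) := by
          rw [← Finset.mul_sum, Finset.sum_congr rfl fun i _ => hν i,
            Finset.sum_range_sub (fun i => ν.real (Ioc a (x i))), hx0, hxm, Ioc_self,
            measureReal_empty, sub_zero]
  have hlim : Tendsto (fun ε => ε * ν.real (Ioc a b)) (𝓝[>] 0) (𝓝 0) := by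
    simpa using
      ((continuous_mul_const (ν.real (Ioc a b))).tendsto 0).mono_left nhdsWithin_le_nhds
  have := ge_of_tendsto hlim (eventually_nhdsWithin_of_forall hbound)
  linarith [abs_nonpos_iff.1 this]

theorem exists_mem_uIcc_sub_eq_deriv_mul {f : ℝ → ℝ} (hf : Differentiable ℝ f) (x y : ℝ) :
    ∃ ξ ∈ uIcc x y, f y - f x = deriv f ξ * (y - x) := by
  wlog hxy : x ≤ y generalizing x y
  · obtain ⟨ξ, hξ, h⟩ := this y x (le_of_not_ge hxy)
    exact ⟨ξ, uIcc_comm x y ▸ hξ, by linear_combination -h⟩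
  rcases hxy.eq_or_lt with rfl | hlt
  · exact ⟨x, by simp, by simp⟩
  obtain ⟨ξ, hξ, hd⟩ :=
    exists_deriv_eq_slope f hlt hf.continuous.continuousOn hf.differentiableOn
  exact ⟨ξ, uIcc_of_le hxy ▸ Ioo_subset_Icc_self hξ, by
    rw [hd, div_mul_cancel₀ _ (sub_ne_zero.2 hlt.ne')]⟩

theorem exists_mem_Icc_sub_eq_deriv_comp_mul {f g : ℝ → ℝ} (hf : Differentiable ℝ f)
    {u v : ℝ} (huv : u ≤ v) (hg : ContinuousOn g (Icc u v)) :
    ∃ s ∈ Icc u v, f (g v) - f (g u) = deriv f (g s) * (g v - g u) := by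
  obtain ⟨ξ, hξ, h⟩ := exists_mem_uIcc_sub_eq_deriv_mul hf (g u) (g v)
  obtain ⟨s, hs, rfl⟩ := intermediate_value_uIcc (by rwa [uIcc_of_le huv]) hξ
  exact ⟨s, uIcc_of_le huv ▸ hs, h⟩

theorem sub_eq_signedIntegral_deriv_comp {μ : SignedMeasure ℝ} {f g : ℝ → ℝ} {a b : ℝ}
    (hab : a ≤ b) (hg : ContinuousOn g (Icc a b))
    (hμ : ∀ u v, a ≤ u → u ≤ v → v ≤ b → μ (Ioc u v) = g v - g u) (hf : ContDiff ℝ 1 f) :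
    f (g b) - f (g a) = signedIntegral μ (Ioc a b) (fun s => deriv f (g s)) := by
  set h := fun s => deriv f (g s)
  have hh : ContinuousOn h (Icc a b) := (hf.continuous_deriv le_rfl).comp_continuousOn hg
  have hint : ∀ u v, a ≤ u → v ≤ b → IntegrableOn h (Ioc u v) μ.totalVariation :=
    fun u v hu hv => hh.integrableOn_Icc.mono_set (Ioc_subset_Icc_self.trans (Icc_subset_Icc hu hv))
  set Φ := fun x => f (g x) - signedIntegral μ (Ioc a x) h
  suffices Φ b = Φ a by
    simp only [Φ, Ioc_self, signedIntegral_empty, sub_zero] at this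
    linarith
  refine eq_of_forall_abs_sub_le_mul_measureReal μ.totalVariation hab fun ε hε => ?_
  obtain ⟨δ, hδ, hhδ⟩ := Metric.uniformContinuousOn_iff.1
    (isCompact_Icc.uniformContinuousOn_of_continuous hh) ε hε
  refine ⟨δ, hδ, fun u v hau huv hvb hδuv => ?_⟩
  obtain ⟨s, hs, hmvt⟩ := exists_mem_Icc_sub_eq_deriv_comp_mul (hf.differentiable one_ne_zero)
    huv (hg.mono (Icc_subset_Icc hau hvb))
  have hΦ : Φ v - Φ u =
      signedIntegral μ (Ioc u v) (fun _ => h s) - signedIntegral μ (Ioc u v) h := by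
    have hsplit := signedIntegral_union (Ioc_disjoint_Ioc_of_le le_rfl) measurableSet_Ioc
      ((Ioc_union_Ioc_eq_Ioc hau huv).symm ▸ hint a v le_rfl hvb)
    rw [Ioc_union_Ioc_eq_Ioc hau huv] at hsplit
    simp only [Φ, hsplit, signedIntegral_const measurableSet_Ioc, hμ u v hau huv hvb, h]
    linear_combination hmvt
  rw [hΦ, signedIntegral_sub (integrableOn_const (measure_ne_top _ _)) (hint u v hau hvb)]
  refine abs_signedIntegral_le fun r hr => ?_
  have hr' : r ∈ Icc a b := ⟨hau.trans hr.1.le, hr.2.trans hvb⟩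
  have hsr : dist s r < δ := by
    rw [Real.dist_eq, abs_lt]; constructor <;> linarith [hs.1, hs.2, hr.1, hr.2]
  exact (hhδ s ⟨hau.trans hs.1, hs.2.trans hvb⟩ r hr' hsr).le

theorem sub_eq_signedIntegral_deriv_comp_of_eqOn_add_const {μ : SignedMeasure ℝ}
    {f g W : ℝ → ℝ} {a b C : ℝ} (hab : a ≤ b) (hg : ContinuousOn g (Icc a b))
    (hμ : ∀ u v, a ≤ u → u ≤ v → v ≤ b → μ (Ioc u v) = g v - g u) (hf : ContDiff ℝ 1 f)
    (hW : ∀ x ∈ Icc a b, W x = g x + C) :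
    f (W b) - f (W a) = signedIntegral μ (Ioc a b) (fun s => deriv f (W s)) := by
  have hshift := sub_eq_signedIntegral_deriv_comp (g := fun x => g x + C) hab
    (hg.add continuousOn_const) (fun u v hu huv hv => by
      show _ = (g v + C) - (g u + C); rw [hμ u v hu huv hv]; ring) hf
  rw [hW b ⟨hab, le_rfl⟩, hW a ⟨le_rfl, hab⟩, hshift]
  exact signedIntegral_congr_ae measurableSet_Ioc
    (.of_forall fun x hx => by rw [hW x (Ioc_subset_Icc_self hx)])

theorem totalVariation_singleton_eq_zero_of_continuousOn {μ : SignedMeasure ℝ} {g : ℝ → ℝ}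
    {a b x : ℝ} (hg : ContinuousOn g (Icc a b))
    (hμ : ∀ u v, a ≤ u → u ≤ v → v ≤ b → μ (Ioc u v) = g v - g u) (hx : x ∈ Ioc a b) :
    μ.totalVariation {x} = 0 := by
  refine SignedMeasure.totalVariation_singleton_eq_zero ?_
  obtain ⟨y, hy_mono, hy_mem, hy_lim⟩ := exists_seq_strictMono_tendsto' hx.1
  have hinter : ⋂ n, Ioc (y n) x = {x} := by
    ext z
    simp only [mem_iInter, mem_Ioc, mem_singleton_iff]
    refine ⟨fun hz => le_antisymm (hz 0).2 (le_of_tendsto' hy_lim fun n => (hz n).1.le),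
      fun hz n => ⟨hz ▸ (hy_mem n).2, hz.le⟩⟩
  have hμlim : Tendsto (fun n => μ (Ioc (y n) x)) atTop (𝓝 (μ {x})) := hinter ▸
    VectorMeasure.tendsto_vectorMeasure_iInter_atTop_nat
      (fun m n hmn => Ioc_subset_Ioc_left (hy_mono.monotone hmn)) fun _ => measurableSet_Ioc
  have hglim : Tendsto (fun n => g (y n)) atTop (𝓝 (g x)) :=
    (hg x ⟨hx.1.le, hx.2⟩).tendsto.comp (tendsto_nhdsWithin_iff.2
      ⟨hy_lim, .of_forall fun n => ⟨(hy_mem n).1.le, (hy_mem n).2.le.trans hx.2⟩⟩)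
  refine tendsto_nhds_unique hμlim ?_
  simpa [hμ _ _ (hy_mem _).1.le (hy_mem _).2.le hx.2] using
    (tendsto_const_nhds (x := g x)).sub hglim

def addJumps (g D : ℝ → ℝ) (F : Finset ℝ) (s : ℝ) : ℝ :=
  g s + ∑ u ∈ F with u ≤ s, D u

section AddJumps

variable {g D : ℝ → ℝ}

@[simp]
theorem addJumps_empty : addJumps g D ∅ = g := by
  ext s; simp [addJumps]

theorem addJumps_insert_of_lt {F : Finset ℝ} {c x : ℝ} (hx : x < c) :
    addJumps g D (insert c F) x = addJumps g D F x := by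
  simp [addJumps, Finset.filter_insert, not_le.2 hx]

theorem addJumps_insert_of_le {F : Finset ℝ} {c x : ℝ} (hc : c ∉ F) (hx : c ≤ x) :
    addJumps g D (insert c F) x = addJumps g D F x + D c := by
  simp [addJumps, Finset.filter_insert, hx, hc]
  ring

theorem addJumps_insert_of_eq_zero {F : Finset ℝ} {c : ℝ} (hc : D c = 0) :
    addJumps g D (insert c F) = addJumps g D F := by
  by_cases hcF : c ∈ F
  · rw [Finset.insert_eq_of_mem hcF]
  ext x
  rcases lt_or_ge x c with hx | hx
  · exact addJumps_insert_of_lt hx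
  · rw [addJumps_insert_of_le hcF hx, hc, add_zero]

theorem addJumps_of_forall_le {F : Finset ℝ} {x : ℝ} (hx : ∀ u ∈ F, u ≤ x) :
    addJumps g D F x = g x + ∑ u ∈ F, D u := by
  rw [addJumps, Finset.filter_true_of_mem hx]

theorem abs_addJumps_le (F : Finset ℝ) (x : ℝ) :
    |addJumps g D F x| ≤ |g x| + ∑ u ∈ F, |D u| :=
  (abs_add_le _ _).trans <| by
    gcongr
    exact (Finset.abs_sum_le_sum_abs _ _).trans
      (Finset.sum_le_sum_of_subset_of_nonneg (Finset.filter_subset _ _)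
        fun _ _ _ => abs_nonneg _)

theorem AEMeasurable.addJumps {ν : Measure ℝ} (hg : AEMeasurable g ν) (D : ℝ → ℝ)
    (F : Finset ℝ) : AEMeasurable (addJumps g D F) ν := by
  refine hg.add (Measurable.aemeasurable ?_)
  simp_rw [Finset.sum_filter]
  exact Finset.measurable_sum F fun u _ =>
    Measurable.ite measurableSet_Ici measurable_const measurable_const

end AddJumps

theorem Continuous.integrableOn_comp_of_abs_le {Ω : Type*} [MeasurableSpace Ω]
    {ν : Measure Ω} [IsFiniteMeasure ν] {h : ℝ → ℝ} (hh : Continuous h) {W : Ω → ℝ} {A : Set Ω}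
    (hA : MeasurableSet A) (hW : AEMeasurable W (ν.restrict A)) {R : ℝ}
    (hR : ∀ x ∈ A, |W x| ≤ R) : IntegrableOn (fun x => h (W x)) A ν := by
  obtain ⟨M, hM⟩ :=
    isCompact_Icc.exists_bound_of_continuousOn (hh.continuousOn (s := Icc (-R) R))
  refine Integrable.mono' (integrable_const M)
    (hh.measurable.comp_aemeasurable hW).aestronglyMeasurable ?_
  exact (ae_restrict_iff' hA).2 (.of_forall fun x hx => hM _ (abs_le.1 (hR x hx)))

theorem integrableOn_deriv_comp_addJumps {ν : Measure ℝ} [IsFiniteMeasure ν] {f g : ℝ → ℝ}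
    (hf : ContDiff ℝ 1 f) {a b : ℝ} (hg : ContinuousOn g (Icc a b)) (D : ℝ → ℝ)
    (F : Finset ℝ) : IntegrableOn (fun s => deriv f (addJumps g D F s)) (Ioc a b) ν := by
  obtain ⟨C, hC⟩ := isCompact_Icc.exists_bound_of_continuousOn hg
  refine (hf.continuous_deriv le_rfl).integrableOn_comp_of_abs_le measurableSet_Ioc
    (((hg.mono Ioc_subset_Icc_self).aemeasurable measurableSet_Ioc).addJumps D F)
    (R := C + ∑ u ∈ F, |D u|) fun x hx => ?_
  exact (abs_addJumps_le F x).trans (by gcongr; exact hC x (Ioc_subset_Icc_self hx))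

theorem sub_eq_signedIntegral_add_sum_jumps {μ : SignedMeasure ℝ} {f g D : ℝ → ℝ}
    (hf : ContDiff ℝ 1 f) (F : Finset ℝ) {a b : ℝ} (hab : a ≤ b) (hg : ContinuousOn g (Icc a b))
    (hμ : ∀ u v, a ≤ u → u ≤ v → v ≤ b → μ (Ioc u v) = g v - g u)
    (hF : ∀ u ∈ F, D u ≠ 0 → u ∈ Ioc a b) :
    f (addJumps g D F b) - f (g a) =
      signedIntegral μ (Ioc a b) (fun s => deriv f (addJumps g D F s)) +
        ∑ u ∈ F, (f (addJumps g D F u) - f (addJumps g D F u - D u)) := by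
  induction F using Finset.induction_on_max generalizing b with
  | empty => simpa using sub_eq_signedIntegral_deriv_comp hab hg hμ hf
  | insert c F hlt ih =>
    have hcF : c ∉ F := fun h => lt_irrefl c (hlt c h)
    have hF' : ∀ u ∈ F, D u ≠ 0 → u ∈ Ioc a b := fun u hu => hF u (Finset.mem_insert_of_mem hu)
    rw [Finset.sum_insert hcF]
    by_cases hc : D c = 0
    · simpa [addJumps_insert_of_eq_zero hc, hc] using ih hab hg hμ hF'
    obtain ⟨hac, hcb⟩ := hF c (Finset.mem_insert_self c F) hc
    have hWlt : ∀ x < c, addJumps g D (insert c F) x = addJumps g D F x :=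
      fun x hx => addJumps_insert_of_lt hx
    have hWc : addJumps g D (insert c F) c - D c = addJumps g D F c := by
      rw [addJumps_insert_of_le hcF le_rfl]; ring
    have hWC : ∀ x, c ≤ x → addJumps g D (insert c F) x = g x + ∑ u ∈ insert c F, D u :=
      fun x hx => addJumps_of_forall_le fun u hu =>
        (Finset.mem_insert.1 hu).elim (· ▸ hx) fun h => (hlt u h).le.trans hx
    have hint := integrableOn_deriv_comp_addJumps (ν := μ.totalVariation) hf hg D (insert c F)
    set W := addJumps g D (insert c F)
    set W' := addJumps g D F
    have hIH := ih hac.le (hg.mono (Icc_subset_Icc_right hcb))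
      (fun u v hu huv hv => hμ u v hu huv (hv.trans hcb))
      (fun u hu hDu => ⟨(hF' u hu hDu).1, (hlt u hu).le⟩)
    have hleft : signedIntegral μ (Ioc a c) (fun s => deriv f (W s)) =
        signedIntegral μ (Ioc a c) (fun s => deriv f (W' s)) := by
      refine signedIntegral_congr_ae measurableSet_Ioc ?_
      have hnull := totalVariation_singleton_eq_zero_of_continuousOn hg hμ ⟨hac, hcb⟩
      filter_upwards [measure_eq_zero_iff_ae_notMem.1 hnull] with x hx hxI
      rw [hWlt x (lt_of_le_of_ne hxI.2 hx)]
    have hright : f (W b) - f (W c) = signedIntegral μ (Ioc c b) (fun s => deriv f (W s)) :=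
      sub_eq_signedIntegral_deriv_comp_of_eqOn_add_const hcb
        (hg.mono (Icc_subset_Icc_left hac.le))
        (fun u v hu huv hv => hμ u v (hac.le.trans hu) huv hv) hf fun x hx => hWC x hx.1
    have hsplit := signedIntegral_union (μ := μ) (Ioc_disjoint_Ioc_of_le le_rfl) measurableSet_Ioc
      ((Ioc_union_Ioc_eq_Ioc hac.le hcb).symm ▸ hint)
    rw [Ioc_union_Ioc_eq_Ioc hac.le hcb] at hsplit
    have hsum : ∑ u ∈ F, (f (W u) - f (W u - D u)) = ∑ u ∈ F, (f (W' u) - f (W' u - D u)) :=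
      Finset.sum_congr rfl fun u hu => by rw [hWlt u (hlt u hu)]
    rw [hsplit, hleft, hsum, hWc]
    linarith

/-- Dominated convergence needs a sequence, and `atTop` on `Finset β` is not countably
generated. -/
theorem exists_seq_tsum_compl_tendsto_zero {β : Type*} (f : β → ℝ) :
    ∃ F : ℕ → Finset β, Tendsto (fun n => ∑' u : {u // u ∉ F n}, f u) atTop (𝓝 0) := by
  have h := tendsto_tsum_compl_atTop_zero f
  have := neBot_of_le h.le_comap
  obtain ⟨F, hF⟩ := (comap (fun F : Finset β => ∑' u : {u // u ∉ F}, f u) (𝓝 0)).exists_seq_tendsto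
  exact ⟨F, tendsto_comap_iff.1 hF⟩

theorem abs_addJumps_sub_le {g D : ℝ → ℝ} (hD : Summable D) {s y : ℝ}
    (hy : HasSum (fun u => (Iic s).indicator D u) (y - g s)) (F : Finset ℝ) :
    |addJumps g D F s - y| ≤ ∑' u : {u // u ∉ F}, |D u| := by
  set h := (Iic s).indicator D
  have hsplit := hy.summable.sum_add_tsum_subtype_compl F
  have hF : ∑ u ∈ F with u ≤ s, D u = ∑ u ∈ F, h u := by
    simp [h, Finset.sum_filter, Set.indicator_apply]
  have habs : ∀ u, |h u| ≤ |D u| := fun u => by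
    simp only [h, Set.indicator_apply]; split_ifs <;> simp
  have hsum : Summable fun u : {u // u ∉ F} => |D u| := hD.abs.subtype _
  have hsumh : Summable fun u : {u // u ∉ F} => |h u| :=
    Summable.of_nonneg_of_le (fun _ => abs_nonneg _) (fun u => habs u) hsum
  calc |addJumps g D F s - y| = |∑' u : {u // u ∉ F}, h u| := by
        rw [addJumps, hF, show y = g s + ∑' u, h u by rw [hy.tsum_eq]; ring, ← hsplit, ← abs_neg]
        ring_nf
    _ ≤ ∑' u : {u // u ∉ F}, |h u| := by
        have := norm_tsum_le_tsum_norm (f := fun u : {u // u ∉ F} => h u)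
          (by simpa only [Real.norm_eq_abs] using hsumh)
        simpa only [Real.norm_eq_abs] using this
    _ ≤ ∑' u : {u // u ∉ F}, |D u| := hsumh.tsum_le_tsum (fun u => habs u) hsum

theorem exists_seq_addJumps_tendsto {g D V : ℝ → ℝ} {S : Set ℝ} (hD : Summable D)
    (hV : ∀ s ∈ S, HasSum (fun u => (Iic s).indicator D u) (V s - g s)) :
    ∃ F : ℕ → Finset ℝ, (∀ s ∈ S, Tendsto (fun n => addJumps g D (F n) s) atTop (𝓝 (V s))) ∧
      ∀ u, D u ≠ 0 → ∀ᶠ n in atTop, u ∈ F n := by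
  obtain ⟨F, hF⟩ := exists_seq_tsum_compl_tendsto_zero fun u => |D u|
  refine ⟨F, fun s hs => ?_, fun u hu => ?_⟩
  · exact tendsto_iff_norm_sub_tendsto_zero.2 <| squeeze_zero (fun _ => norm_nonneg _)
      (fun n => abs_addJumps_sub_le hD (hV s hs) (F n)) hF
  · filter_upwards [(tendsto_order.1 hF).2 _ (abs_pos.2 hu)] with n hn
    by_contra huF
    exact hn.not_ge ((hD.abs.subtype _).le_tsum ⟨u, huF⟩ fun _ _ => abs_nonneg _)

theorem exists_addJumps_mem_Icc {g D : ℝ → ℝ} (hD : Summable D) {a b : ℝ}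
    (hg : ContinuousOn g (Icc a b)) :
    ∃ R, ∀ F, ∀ s ∈ Icc a b, ∀ u, addJumps g D F s ∈ Icc (-R) R ∧
      addJumps g D F s - D u ∈ Icc (-R) R := by
  obtain ⟨C, hC⟩ := isCompact_Icc.exists_bound_of_continuousOn hg
  refine ⟨C + 2 * ∑' u, |D u|, fun F s hs u => ?_⟩
  have hW := abs_le.1 ((abs_addJumps_le F s).trans
    (add_le_add (hC s hs) (hD.abs.sum_le_tsum _ fun _ _ => abs_nonneg _)))
  have hDu := abs_le.1 (hD.abs.le_tsum u fun _ _ => abs_nonneg _)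
  refine ⟨⟨?_, ?_⟩, ?_, ?_⟩ <;> linarith [hW.1, hW.2, hDu.1, hDu.2]

section Jumps

variable {f V D : ℝ → ℝ} {K : ℝ≥0} {R : ℝ}

theorem abs_jump_le (hK : LipschitzOnWith K f (Icc (-R) R)) {x d : ℝ}
    (hx : d ≠ 0 → x ∈ Icc (-R) R ∧ x - d ∈ Icc (-R) R) : |f x - f (x - d)| ≤ K * |d| := by
  rcases eq_or_ne d 0 with rfl | hd
  · simp
  simpa [Real.dist_eq, abs_sub_comm] using hK.dist_le_mul _ (hx hd).2 _ (hx hd).1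

theorem summable_jumps (hK : LipschitzOnWith K f (Icc (-R) R)) (hD : Summable D)
    (hR : ∀ u, D u ≠ 0 → V u ∈ Icc (-R) R ∧ V u - D u ∈ Icc (-R) R) :
    Summable fun u => f (V u) - f (V u - D u) :=
  (hD.abs.mul_left (K : ℝ)).of_norm_bounded fun u => abs_jump_le hK (hR u)

theorem tendsto_sum_jumps {W : ℕ → ℝ → ℝ} {F : ℕ → Finset ℝ} (hf : Continuous f)
    (hK : LipschitzOnWith K f (Icc (-R) R)) (hD : Summable D)
    (hF : ∀ u, D u ≠ 0 → ∀ᶠ n in atTop, u ∈ F n)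
    (hWV : ∀ u, D u ≠ 0 → Tendsto (W · u) atTop (𝓝 (V u)))
    (hR : ∀ n u, D u ≠ 0 → W n u ∈ Icc (-R) R ∧ W n u - D u ∈ Icc (-R) R) :
    Tendsto (fun n => ∑ u ∈ F n, (f (W n u) - f (W n u - D u))) atTop
      (𝓝 (∑' u, (f (V u) - f (V u - D u)))) := by
  set T := fun n u => if u ∈ F n then f (W n u) - f (W n u - D u) else 0
  have hT : ∀ n, ∑' u, T n u = ∑ u ∈ F n, (f (W n u) - f (W n u - D u)) := fun n => by
    rw [tsum_eq_sum (s := F n) fun u hu => if_neg hu]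
    exact Finset.sum_congr rfl fun u hu => if_pos hu
  refine (tendsto_tsum_of_dominated_convergence (bound := fun u => K * |D u|)
    (hD.abs.mul_left (K : ℝ)) (fun u => ?_) (.of_forall fun n u => ?_)).congr hT
  · rcases eq_or_ne (D u) 0 with hu | hu
    · simp [T, hu]
    refine Tendsto.congr' ((hF u hu).mono fun n hn => (if_pos hn).symm) ?_
    exact ((hf.tendsto _).comp (hWV u hu)).sub ((hf.tendsto _).comp ((hWV u hu).sub_const _))
  · simp only [T, Real.norm_eq_abs]
    split_ifs
    · exact abs_jump_le hK (hR n u)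
    · simp only [abs_zero]; positivity

end Jumps

theorem sub_eq_signedIntegral_add_tsum_jumps {μ : SignedMeasure ℝ} {f g D V : ℝ → ℝ}
    (hf : ContDiff ℝ 1 f) {a b : ℝ} (hab : a ≤ b) (hg : ContinuousOn g (Icc a b))
    (hμ : ∀ u v, a ≤ u → u ≤ v → v ≤ b → μ (Ioc u v) = g v - g u)
    (hD : ∀ u, D u ≠ 0 → u ∈ Ioc a b)
    (hV : ∀ s ∈ Icc a b, HasSum (fun u => (Iic s).indicator D u) (V s - g s)) :
    Summable (fun u => f (V u) - f (V u - D u)) ∧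
      f (V b) - f (V a) = signedIntegral μ (Ioc a b) (fun s => deriv f (V s)) +
        ∑' u, (f (V u) - f (V u - D u)) := by
  have hDs : Summable D := by
    have hDb : (Iic b).indicator D = D := indicator_eq_self.2 fun u hu => (hD u hu).2
    simpa only [hDb] using (hV b ⟨hab, le_rfl⟩).summable
  have hVa : V a = g a := by
    have h0 : ∀ u, (Iic a).indicator D u = 0 := fun u =>
      indicator_apply_eq_zero.2 fun hu => not_ne_iff.1 fun h => (not_le.2 (hD u h).1) hu
    have := (hV a ⟨le_rfl, hab⟩)
    simp only [h0] at this
    linarith [hasSum_zero.unique this]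
  obtain ⟨F, hlim, hmem⟩ := exists_seq_addJumps_tendsto hDs hV
  set W := fun n => addJumps g D (F n)
  obtain ⟨R, hR⟩ := exists_addJumps_mem_Icc hDs hg
  have hVR : ∀ s ∈ Icc a b, ∀ u, V s ∈ Icc (-R) R ∧ V s - D u ∈ Icc (-R) R := fun s hs u =>
    ⟨isClosed_Icc.mem_of_tendsto (hlim s hs) (.of_forall fun n => (hR _ s hs u).1),
      isClosed_Icc.mem_of_tendsto ((hlim s hs).sub_const _) (.of_forall fun n => (hR _ s hs u).2)⟩
  obtain ⟨K, hK⟩ :=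
    hf.locallyLipschitz.locallyLipschitzOn.exists_lipschitzOnWith_of_compact isCompact_Icc
  obtain ⟨M, hM⟩ := isCompact_Icc.exists_bound_of_continuousOn
    (hf.continuous_deriv le_rfl).continuousOn (s := Icc (-R) R)
  have hformula : ∀ n, f (W n b) - f (V a) = signedIntegral μ (Ioc a b) (fun s => deriv f (W n s))
      + ∑ u ∈ F n, (f (W n u) - f (W n u - D u)) := fun n =>
    hVa ▸ sub_eq_signedIntegral_add_sum_jumps hf (F n) hab hg hμ fun u _ hu => hD u hu
  have hint : Tendsto (fun n => signedIntegral μ (Ioc a b) (fun s => deriv f (W n s))) atTop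
      (𝓝 (signedIntegral μ (Ioc a b) fun s => deriv f (V s))) :=
    tendsto_signedIntegral_of_dominated_convergence measurableSet_Ioc
      (fun n => ((hf.continuous_deriv le_rfl).measurable.comp_aemeasurable
        (((hg.mono Ioc_subset_Icc_self).aemeasurable measurableSet_Ioc).addJumps D
          (F n))).aestronglyMeasurable)
      (fun n s hs => hM _ (hR _ s (Ioc_subset_Icc_self hs) s).1)
      (fun s hs => ((hf.continuous_deriv le_rfl).tendsto _).comp (hlim s (Ioc_subset_Icc_self hs)))
  have hsum := tendsto_sum_jumps hf.continuous hK hDs hmem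
    (fun u hu => hlim u (Ioc_subset_Icc_self (hD u hu)))
    (fun n u hu => hR _ u (Ioc_subset_Icc_self (hD u hu)) u)
  refine ⟨summable_jumps hK hDs fun u hu => hVR u (Ioc_subset_Icc_self (hD u hu)) u,
    tendsto_nhds_unique ?_ ((hint.add hsum).congr fun n => (hformula n).symm)⟩
  exact ((hf.continuous.tendsto _).comp (hlim b ⟨hab, le_rfl⟩)).sub_const _

theorem change_of_variables_stieltjes_general
    (V Vm Vc Vd : ℝ → ℝ)
    (hdecomp : ∀ s ∈ Set.Ici (0 : ℝ), V s = Vc s + Vd s)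
    (hVc_cont : ContinuousOn Vc (Set.Ici 0))
    (hVd_sum : ∀ s ∈ Set.Ici (0 : ℝ),
      HasSum (fun u : Set.Ioc (0 : ℝ) s => V u.1 - Vm u.1) (Vd s))
    (t : ℝ) (ht : 0 < t)
    (μc : MeasureTheory.SignedMeasure ℝ)
    (hμc : ∀ a b : ℝ, 0 ≤ a → a ≤ b → b ≤ t → μc (Set.Ioc a b) = Vc b - Vc a)
    (f : ℝ → ℝ) (hf : ContDiff ℝ 1 f) :
    Summable (fun s : Set.Ioc (0 : ℝ) t => |f (V s.1) - f (Vm s.1)|) ∧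
      f (V t) - f (V 0) =
        signedIntegral μc (Set.Ioc 0 t) (fun s => deriv f (V s)) +
          ∑' s : Set.Ioc (0 : ℝ) t, (f (V s.1) - f (Vm s.1)) := by
  set D := (Ioc 0 t).indicator fun u => V u - Vm u
  have hD : ∀ u, D u ≠ 0 → u ∈ Ioc 0 t := fun u hu => by
    by_contra h; exact hu (indicator_of_notMem h _)
  have hV : ∀ s ∈ Icc 0 t, HasSum (fun u => (Iic s).indicator D u) (V s - Vc s) := by
    intro s hs
    have hIoc : Iic s ∩ Ioc 0 t = Ioc 0 s :=
      Set.ext fun u => ⟨fun h => ⟨h.2.1, h.1⟩, fun h => ⟨h.2, h.1, h.2.trans hs.2⟩⟩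
    rw [indicator_indicator, hIoc, ← hasSum_subtype_iff_indicator, hdecomp s hs.1,
      add_sub_cancel_left]
    exact hVd_sum s hs.1
  have hjumps : (fun u => f (V u) - f (V u - D u)) =
      (Ioc 0 t).indicator fun u => f (V u) - f (Vm u) := by
    ext u
    by_cases hu : u ∈ Ioc 0 t <;> simp [D, hu]
  obtain ⟨hsum, heq⟩ := sub_eq_signedIntegral_add_tsum_jumps hf ht.le
    (hVc_cont.mono Icc_subset_Ici_self) hμc hD hV
  rw [hjumps] at hsum heq
  exact ⟨(summable_subtype_iff_indicator.2 hsum).abs,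
    by rw [heq, tsum_subtype (Ioc 0 t) fun u => f (V u) - f (Vm u)]⟩

/-- first change-of-variables formula. Let `V` be càdlàg on `[0,∞)` with
finite variation on compacts and canonical decomposition `V = Vc + Vd`, let `μc` be the
signed Stieltjes measure of the continuous part `Vc` on `[0,t]`, and let `f` be of class
`C¹`. Then for every `t > 0`,
`f(V t) − f(V 0) = ∫_0^t f'(V s) μc(ds) + Σ_{0<s≤t} (f(V s) − f(V s−))`,
the sum being absolutely convergent. -/
theorem change_of_variables_stieltjes
    (V Vm Vc Vd : ℝ → ℝ)
    (hV_rc : ∀ s ∈ Set.Ici (0 : ℝ), ContinuousWithinAt V (Set.Ici s) s)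
    (hV_ll : ∀ s ∈ Set.Ioi (0 : ℝ),
      Filter.Tendsto V (nhdsWithin s (Set.Iio s)) (nhds (Vm s)))
    (hV_bv : ∀ T : ℝ, BoundedVariationOn V (Set.Icc 0 T))
    (hdecomp : ∀ s ∈ Set.Ici (0 : ℝ), V s = Vc s + Vd s)
    (hVc_cont : ContinuousOn Vc (Set.Ici 0))
    (hVc_bv : ∀ T : ℝ, BoundedVariationOn Vc (Set.Icc 0 T))
    (hVd_sum : ∀ s ∈ Set.Ici (0 : ℝ),
      HasSum (fun u : Set.Ioc (0 : ℝ) s => V u.1 - Vm u.1) (Vd s))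
    (hVd_abs : ∀ s ∈ Set.Ici (0 : ℝ),
      Summable (fun u : Set.Ioc (0 : ℝ) s => |V u.1 - Vm u.1|))
    (t : ℝ) (ht : 0 < t)
    (μc : MeasureTheory.SignedMeasure ℝ)
    (hμc : ∀ a b : ℝ, 0 ≤ a → a ≤ b → b ≤ t → μc (Set.Ioc a b) = Vc b - Vc a)
    (f : ℝ → ℝ) (hf : ContDiff ℝ 1 f) :
    Summable (fun s : Set.Ioc (0 : ℝ) t => |f (V s.1) - f (Vm s.1)|) ∧
      f (V t) - f (V 0) =
        signedIntegral μc (Set.Ioc 0 t) (fun s => deriv f (V s)) +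
          ∑' s : Set.Ioc (0 : ℝ) t, (f (V s.1) - f (Vm s.1)) :=
  change_of_variables_stieltjes_general V Vm Vc Vd hdecomp hVc_cont hVd_sum t ht μc hμc f hf
end
end

section
/- Let V : [0,∞) → ℝ be a right-continuous function with left limits, of finite variation on every compact interval. Then the set of complex levels for V has Lebesgue measure zero; equivalently, Lebesgue-almost every x ∈ ℝ is a simple level for V. -/
/-!
Banach indicatrix. Cut `[0, T]` into dyadic intervals of length `2⁻ⁿ` and let `Nₙ(x)` count
those intervals on which the closed interval spanned by the values of `V` contains `x`. Each span
has length at most the variation of `V` on its dyadic interval, so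
`∫ Nₙ ≤ Var(V, [0, T])`, and by Fatou `liminf Nₙ < ∞` almost everywhere. Any `k` distinct times
`u ≤ T` at which `x` lies between `V(u−)` and `V(u)` fall, for `n` large, into `k` distinct dyadic
intervals, whose spans all contain `x`; so for almost every `x` there are finitely many such times
below every `T`, and they cannot accumulate. Finally, `V` is a difference of monotone functions, so
it has countably many jumps, and the countable set of values at their ends is null.
-/

open MeasureTheory Set Filter
open scoped ENNReal NNReal

noncomputable section

/-- `x` is a *simple level* for `V` (with left limits `Vm`): the set
`{t > 0 : V(t−) < x < V(t) or V(t) < x < V(t−) or V(t) = x}` has no accumulation point in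
`[0,∞)` (it is discrete), and no jump of `V` starts or ends at `x`. -/
def SimpleLevel (V Vm : ℝ → ℝ) (x : ℝ) : Prop :=
  (∀ a : ℝ, 0 ≤ a →
      ¬ AccPt a (Filter.principal
        {u : ℝ | 0 < u ∧ ((Vm u < x ∧ x < V u) ∨ (V u < x ∧ x < Vm u) ∨ V u = x)})) ∧
  {u : ℝ | 0 < u ∧ V u ≠ Vm u ∧ (x = V u ∨ x = Vm u)} = ∅

open Topology
open scoped Finset

-- The convex hull of the values rather than their closure: a level crossed by a jump need not be
-- a value of `f`.
def spanIcc {α : Type*} (f : α → ℝ) (s : Set α) : Set ℝ := Icc (sInf (f '' s)) (sSup (f '' s))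

theorem measurableSet_spanIcc {α : Type*} {f : α → ℝ} {s : Set α} :
    MeasurableSet (spanIcc f s) :=
  measurableSet_Icc

section Span

variable {α : Type*} [LinearOrder α] {f : α → ℝ} {s : Set α}

theorem BoundedVariationOn.isBounded_image (h : BoundedVariationOn f s) :
    Bornology.IsBounded (f '' s) :=
  Metric.isBounded_iff.2 ⟨_, by
    rintro _ ⟨u, hu, rfl⟩ _ ⟨v, hv, rfl⟩
    exact h.dist_le hu hv⟩

theorem BoundedVariationOn.mem_spanIcc (h : BoundedVariationOn f s) {t : α} (ht : t ∈ s) :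
    f t ∈ spanIcc f s :=
  ⟨csInf_le h.isBounded_image.bddBelow (mem_image_of_mem f ht),
    le_csSup h.isBounded_image.bddAbove (mem_image_of_mem f ht)⟩

theorem volume_spanIcc_le_eVariationOn (f : α → ℝ) (s : Set α) :
    volume (spanIcc f s) ≤ eVariationOn f s := by
  rcases eq_or_ne (eVariationOn f s) ⊤ with h | h
  · simp [h]
  rcases s.eq_empty_or_nonempty with rfl | hs
  · simp [spanIcc]
  rw [spanIcc, Real.volume_Icc, ENNReal.ofReal_le_iff_le_toReal h, sub_le_iff_le_add]
  refine csSup_le (hs.image f) ?_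
  rintro _ ⟨u, hu, rfl⟩
  have : f u - (eVariationOn f s).toReal ≤ sInf (f '' s) := by
    refine le_csInf (hs.image f) ?_
    rintro _ ⟨v, hv, rfl⟩
    linarith [BoundedVariationOn.sub_le h hu hv]
  linarith

end Span

theorem mem_spanIcc_of_tendsto_nhdsLT {f : ℝ → ℝ} {a b t l : ℝ}
    (h : BoundedVariationOn f (Icc a b)) (ht : t ∈ Ioc a b) (hl : Tendsto f (𝓝[<] t) (𝓝 l)) :
    l ∈ spanIcc f (Icc a b) :=
  isClosed_Icc.mem_of_tendsto hl <| eventually_of_mem (Ioo_mem_nhdsLT ht.1) fun _ hu =>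
    h.mem_spanIcc ⟨hu.1.le, hu.2.le.trans ht.2⟩

def partitionIndicatrix {α : Type*} [LinearOrder α] (f : α → ℝ) (I : ℕ → α) (K : ℕ) (x : ℝ) :
    ℝ≥0∞ :=
  ∑ j ∈ Finset.range K, (spanIcc f (Icc (I j) (I (j + 1)))).indicator 1 x

section Indicatrix

variable {α : Type*} [LinearOrder α] (f : α → ℝ) (I : ℕ → α) (K : ℕ)

theorem measurable_partitionIndicatrix : Measurable (partitionIndicatrix f I K) :=
  Finset.measurable_sum _ fun _ _ => measurable_one.indicator measurableSet_spanIcc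

theorem lintegral_partitionIndicatrix_le (hI : Monotone I) :
    ∫⁻ x, partitionIndicatrix f I K x ≤ eVariationOn f (Icc (I 0) (I K)) :=
  calc ∫⁻ x, partitionIndicatrix f I K x
      = ∑ j ∈ Finset.range K, volume (spanIcc f (Icc (I j) (I (j + 1)))) := by
        unfold partitionIndicatrix
        rw [lintegral_finsetSum _ fun _ _ => measurable_one.indicator measurableSet_spanIcc]
        simp only [lintegral_indicator_one measurableSet_spanIcc]
    _ ≤ ∑ j ∈ Finset.range K, eVariationOn f (Icc (I j) (I (j + 1))) :=
        Finset.sum_le_sum fun _ _ => volume_spanIcc_le_eVariationOn _ _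
    _ = eVariationOn f (Icc (I 0) (I K)) := eVariationOn.sum' f hI

theorem card_le_partitionIndicatrix {ι : Type*} {t : Finset ι} {c : ι → ℕ} {x : ℝ}
    (hc : InjOn c t) (hmem : ∀ u ∈ t, c u < K ∧ x ∈ spanIcc f (Icc (I (c u)) (I (c u + 1)))) :
    (#t : ℝ≥0∞) ≤ partitionIndicatrix f I K x :=
  calc (#t : ℝ≥0∞) = #(t.image c) := by rw [Finset.card_image_of_injOn hc]
    _ = ∑ j ∈ t.image c, (spanIcc f (Icc (I j) (I (j + 1)))).indicator 1 x := by
        rw [Finset.card_eq_sum_ones, Nat.cast_sum]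
        refine Finset.sum_congr rfl fun j hj => ?_
        obtain ⟨u, hu, rfl⟩ := Finset.mem_image.1 hj
        rw [indicator_of_mem (hmem u hu).2, Pi.one_apply, Nat.cast_one]
    _ ≤ partitionIndicatrix f I K x :=
        Finset.sum_le_sum_of_subset
          (Finset.image_subset_iff.2 fun u hu => Finset.mem_range.2 (hmem u hu).1)

end Indicatrix

-- Dyadic intervals are taken closed on the right, so that `u` is approached from the left within
-- its own interval and the left limit at `u` lies in that interval's span.
def dyadicIndex (n : ℕ) (u : ℝ) : ℕ := ⌈u * 2 ^ n⌉₊ - 1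

section Dyadic

variable {n : ℕ} {u : ℝ}

theorem mem_Ioc_dyadicIndex (hu : 0 < u) :
    u ∈ Ioc ((dyadicIndex n u : ℝ) / 2 ^ n) (((dyadicIndex n u + 1 : ℕ) : ℝ) / 2 ^ n) := by
  have hceil : 0 < ⌈u * 2 ^ n⌉₊ := Nat.ceil_pos.2 (by positivity)
  have hsucc : dyadicIndex n u + 1 = ⌈u * 2 ^ n⌉₊ := Nat.sub_add_cancel hceil
  have hcast : (dyadicIndex n u : ℝ) = ⌈u * 2 ^ n⌉₊ - 1 := by
    rw [← hsucc, Nat.cast_succ, add_sub_cancel_right]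
  rw [hsucc, hcast, mem_Ioc, div_lt_iff₀ (by positivity), le_div_iff₀ (by positivity)]
  exact ⟨by linarith [Nat.ceil_lt_add_one (by positivity : 0 ≤ u * 2 ^ n)], Nat.le_ceil _⟩

theorem dyadicIndex_lt {T : ℕ} (hu : 0 < u) (huT : u ≤ T) : dyadicIndex n u < T * 2 ^ n := by
  have hle : ⌈u * 2 ^ n⌉₊ ≤ T * 2 ^ n := Nat.ceil_le.2 (by push_cast; gcongr)
  have hpos : 0 < ⌈u * 2 ^ n⌉₊ := Nat.ceil_pos.2 (by positivity)
  unfold dyadicIndex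
  omega

theorem abs_sub_lt_of_dyadicIndex_eq {v : ℝ} (hu : 0 < u) (hv : 0 < v)
    (h : dyadicIndex n u = dyadicIndex n v) : |u - v| < (2 ^ n)⁻¹ := by
  have hu' := mem_Ioc_dyadicIndex (n := n) hu
  have hv' := mem_Ioc_dyadicIndex (n := n) hv
  rw [h, Nat.cast_succ, add_div] at hu'
  rw [Nat.cast_succ, add_div] at hv'
  rw [abs_sub_lt_iff, ← one_div]
  constructor <;> linarith [hu'.1, hu'.2, hv'.1, hv'.2]

theorem eventually_injOn_dyadicIndex (t : Finset ℝ) (ht : ∀ u ∈ t, 0 < u) :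
    ∀ᶠ n in atTop, InjOn (dyadicIndex n) t := by
  have hmesh : Tendsto (fun n : ℕ => ((2 : ℝ) ^ n)⁻¹) atTop (𝓝 0) :=
    tendsto_inv_atTop_zero.comp (tendsto_pow_atTop_atTop_of_one_lt one_lt_two)
  have hsep : ∀ᶠ n in atTop, ∀ u ∈ t, ∀ v ∈ t, u ≠ v → ((2 : ℝ) ^ n)⁻¹ < |u - v| := by
    simp only [eventually_all_finset]
    intro u _ v _
    rcases eq_or_ne u v with rfl | huv
    · simp
    exact (hmesh.eventually (gt_mem_nhds (abs_pos.2 (sub_ne_zero.2 huv)))).mono fun _ hn _ => hn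
  filter_upwards [hsep] with n hn u hu v hv huv
  by_contra hne
  exact (hn u hu v hv hne).not_gt (abs_sub_lt_of_dyadicIndex_eq (ht u hu) (ht v hv) huv)

end Dyadic

def dyadicIndicatrix (f : ℝ → ℝ) (T n : ℕ) : ℝ → ℝ≥0∞ :=
  partitionIndicatrix f (fun j : ℕ => (j : ℝ) / 2 ^ n) (T * 2 ^ n)

theorem lintegral_dyadicIndicatrix_le (f : ℝ → ℝ) (T n : ℕ) :
    ∫⁻ x, dyadicIndicatrix f T n x ≤ eVariationOn f (Icc 0 T) := by
  have h := lintegral_partitionIndicatrix_le f (fun j : ℕ => (j : ℝ) / 2 ^ n) (T * 2 ^ n)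
    fun i j hij => by dsimp only; gcongr
  simpa [dyadicIndicatrix] using h

def crossingTimes (f g : ℝ → ℝ) (x : ℝ) : Set ℝ := {u | 0 < u ∧ x ∈ uIcc (g u) (f u)}

section Crossing

variable {f g : ℝ → ℝ} {T : ℕ} {x : ℝ}

theorem card_le_liminf_dyadicIndicatrix
    (hll : ∀ s ∈ Ioi (0 : ℝ), Tendsto f (𝓝[<] s) (𝓝 (g s)))
    (hbv : BoundedVariationOn f (Icc 0 T)) {t : Finset ℝ}
    (ht : ↑t ⊆ crossingTimes f g x ∩ Iic (T : ℝ)) :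
    (#t : ℝ≥0∞) ≤ liminf (fun n => dyadicIndicatrix f T n x) atTop := by
  refine le_liminf_of_le (by isBoundedDefault) ?_
  filter_upwards [eventually_injOn_dyadicIndex t fun u hu => (ht hu).1.1] with n hinj
  refine card_le_partitionIndicatrix f _ _ hinj fun u hu => ?_
  obtain ⟨⟨hu0, hx⟩, huT⟩ := ht hu
  have hcell := mem_Ioc_dyadicIndex (n := n) hu0
  have hlt := dyadicIndex_lt (n := n) hu0 huT
  have hsub : Icc ((dyadicIndex n u : ℝ) / 2 ^ n) (((dyadicIndex n u + 1 : ℕ) : ℝ) / 2 ^ n)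
      ⊆ Icc 0 T := by
    refine Icc_subset_Icc (by positivity) ((div_le_iff₀ (by positivity)).2 ?_)
    exact_mod_cast hlt
  have hbv' := hbv.mono hsub
  exact ⟨hlt, uIcc_subset_Icc (mem_spanIcc_of_tendsto_nhdsLT hbv' hcell (hll u hu0))
    (hbv'.mem_spanIcc (Ioc_subset_Icc_self hcell)) hx⟩

theorem finite_crossingTimes_of_liminf_lt_top
    (hll : ∀ s ∈ Ioi (0 : ℝ), Tendsto f (𝓝[<] s) (𝓝 (g s)))
    (hbv : BoundedVariationOn f (Icc 0 T))
    (hlt : liminf (fun n => dyadicIndicatrix f T n x) atTop < ⊤) :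
    (crossingTimes f g x ∩ Iic (T : ℝ)).Finite := by
  by_contra hinf
  obtain ⟨k, hk⟩ := ENNReal.exists_nat_gt hlt.ne
  obtain ⟨t, ht, rfl⟩ := Set.Infinite.exists_subset_card_eq hinf k
  exact (card_le_liminf_dyadicIndicatrix hll hbv ht).not_gt hk

theorem ae_finite_crossingTimes
    (hll : ∀ s ∈ Ioi (0 : ℝ), Tendsto f (𝓝[<] s) (𝓝 (g s)))
    (hbv : ∀ T : ℝ, BoundedVariationOn f (Icc 0 T)) :
    ∀ᵐ x, ∀ T : ℕ, (crossingTimes f g x ∩ Iic (T : ℝ)).Finite := by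
  refine ae_all_iff.2 fun T => ?_
  have hmeas : ∀ n, Measurable (dyadicIndicatrix f T n) := fun n =>
    measurable_partitionIndicatrix f _ _
  have hfatou : ∫⁻ x, liminf (fun n => dyadicIndicatrix f T n x) atTop ≠ ⊤ := by
    refine ((lintegral_liminf_le hmeas).trans ?_).trans_lt (hbv T).lt_top |>.ne
    exact liminf_le_of_frequently_le
      (Frequently.of_forall fun n => lintegral_dyadicIndicatrix_le f T n) (by isBoundedDefault)
  filter_upwards [ae_lt_top (Measurable.liminf hmeas) hfatou] with x hx
  exact finite_crossingTimes_of_liminf_lt_top hll (hbv T) hx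

end Crossing

theorem not_accPt_of_forall_finite_inter_Iic {s : Set ℝ} (h : ∀ n : ℕ, (s ∩ Iic (n : ℝ)).Finite)
    (a : ℝ) : ¬AccPt a (𝓟 s) := by
  intro hacc
  obtain ⟨n, hn⟩ := exists_nat_gt a
  have hacc' := hacc.nhds_inter (Iic_mem_nhds hn)
  rw [inter_comm] at hacc'
  exact Set.Infinite.of_accPt hacc' (h n)

theorem LocallyBoundedVariationOn.countable_not_continuousWithinAt {α : Type*} [LinearOrder α]
    [TopologicalSpace α] [OrderTopology α] [SecondCountableTopology α] {f : α → ℝ} {s : Set α}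
    (h : LocallyBoundedVariationOn f s) : {x ∈ s | ¬ContinuousWithinAt f s x}.Countable := by
  obtain ⟨p, q, hp, hq, rfl⟩ := h.exists_monotoneOn_sub_monotoneOn
  refine (hp.countable_not_continuousWithinAt.union hq.countable_not_continuousWithinAt).mono ?_
  rintro x ⟨hxs, hx⟩
  by_contra hpq
  simp only [mem_union, mem_ofPred_eq, not_or, not_and, not_not] at hpq
  exact hx ((hpq.1 hxs).sub (hpq.2 hxs))

theorem countable_setOf_ne_of_tendsto_nhdsLT {f g : ℝ → ℝ}
    (hll : ∀ s ∈ Ioi (0 : ℝ), Tendsto f (𝓝[<] s) (𝓝 (g s)))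
    (hbv : ∀ T : ℝ, BoundedVariationOn f (Icc 0 T)) : {u | 0 < u ∧ f u ≠ g u}.Countable := by
  have hlbv : LocallyBoundedVariationOn f (Ici 0) := fun _ b _ _ =>
    (hbv b).mono fun _ hy => ⟨hy.1, hy.2.2⟩
  refine hlbv.countable_not_continuousWithinAt.mono ?_
  rintro u ⟨hu0, hne⟩
  refine ⟨hu0.le, fun hcont => hne ?_⟩
  exact tendsto_nhds_unique ((hcont.continuousAt (Ici_mem_nhds hu0)).tendsto.mono_left
    nhdsWithin_le_nhds) (hll u hu0)

theorem ae_simple_level_general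
    (V Vm : ℝ → ℝ)
    (hV_ll : ∀ s ∈ Set.Ioi (0 : ℝ),
      Filter.Tendsto V (nhdsWithin s (Set.Iio s)) (nhds (Vm s)))
    (hV_bv : ∀ T : ℝ, BoundedVariationOn V (Set.Icc 0 T)) :
    ∀ᵐ x : ℝ ∂volume, SimpleLevel V Vm x := by
  have hjumps := countable_setOf_ne_of_tendsto_nhdsLT hV_ll hV_bv
  filter_upwards [ae_finite_crossingTimes hV_ll hV_bv,
    ((hjumps.image V).union (hjumps.image Vm)).ae_notMem volume] with x hfin hx
  refine ⟨fun a _ => not_accPt_of_forall_finite_inter_Iic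
    (fun T => (hfin T).subset (inter_subset_inter_left _ ?_)) a, ?_⟩
  · rintro u ⟨hu0, hu⟩
    refine ⟨hu0, ?_⟩
    rcases hu with h | h | h
    · exact Icc_subset_uIcc ⟨h.1.le, h.2.le⟩
    · exact Icc_subset_uIcc' ⟨h.1.le, h.2.le⟩
    · exact h ▸ right_mem_uIcc
  · refine eq_empty_iff_forall_notMem.2 ?_
    rintro u ⟨hu0, hne, rfl | rfl⟩
    · exact hx (Or.inl (mem_image_of_mem V ⟨hu0, hne⟩))
    · exact hx (Or.inr (mem_image_of_mem Vm ⟨hu0, hne⟩))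

/-- For a càdlàg function `V` on `[0,∞)` of finite variation on every
compact interval, Lebesgue-almost every `x ∈ ℝ` is a simple level for `V` (the set of
complex levels has Lebesgue measure zero). -/
theorem ae_simple_level
    (V Vm : ℝ → ℝ)
    (hV_rc : ∀ s ∈ Set.Ici (0 : ℝ), ContinuousWithinAt V (Set.Ici s) s)
    (hV_ll : ∀ s ∈ Set.Ioi (0 : ℝ),
      Filter.Tendsto V (nhdsWithin s (Set.Iio s)) (nhds (Vm s)))
    (hV_bv : ∀ T : ℝ, BoundedVariationOn V (Set.Icc 0 T)) :
    ∀ᵐ x : ℝ ∂volume, SimpleLevel V Vm x :=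
  ae_simple_level_general V Vm hV_ll hV_bv
end
end

section
/- Let V : [0,∞) → ℝ be a right-continuous function with left limits, of finite variation on every compact interval, and for t > 0 let W(t) denote the total variation of V on [0,t]. For x ∈ ℝ set N_x(t) = Card{0 < s ≤ t : V(s−) ≤ x ≤ V(s) or V(s) ≤ x ≤ V(s−)}. Then for every t > 0, ∫_ℝ N_x(t) dx ≤ W(t) < ∞. -/
open MeasureTheory Set Filter
open scoped ENNReal NNReal

noncomputable section

/-- The set `{0 < s ≤ t : V(s−) ≤ x ≤ V(s) or V(s) ≤ x ≤ V(s−)}` of times up to `t` at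
which `x` lies between the left limit and the value of `V`; its cardinality is `N_x(t)`. -/
def crossSet (V Vm : ℝ → ℝ) (x t : ℝ) : Set ℝ :=
  {s | 0 < s ∧ s ≤ t ∧ ((Vm s ≤ x ∧ x ≤ V s) ∨ (V s ≤ x ∧ x ≤ Vm s))}

namespace CrossAux

/-- Partition point `i * t / (n+1)`. -/
def pt (t : ℝ) (n i : ℕ) : ℝ := i * t / (n + 1)

/-- Infimum of `V` over `(a, b]`. -/
def lo (V : ℝ → ℝ) (a b : ℝ) : ℝ := sInf (V '' Set.Ioc a b)

/-- Supremum of `V` over `(a, b]`. -/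
def hi (V : ℝ → ℝ) (a b : ℝ) : ℝ := sSup (V '' Set.Ioc a b)

/-- Partition-level crossing count approximation. -/
def fAp (V : ℝ → ℝ) (t : ℝ) (n : ℕ) (x : ℝ) : ℝ≥0∞ :=
  ∑ i ∈ Finset.range (n + 1),
    (Set.Icc (lo V (pt t n i) (pt t n (i + 1))) (hi V (pt t n i) (pt t n (i + 1)))).indicator
      (1 : ℝ → ℝ≥0∞) x

variable {V : ℝ → ℝ} {t a b s : ℝ} {n i : ℕ}

lemma pt_mono {i j : ℕ} (ht : 0 ≤ t) (hij : i ≤ j) : pt t n i ≤ pt t n j := by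
  have h : (i : ℝ) ≤ j := by exact_mod_cast hij
  unfold pt
  have hpos : (0:ℝ) < n + 1 := by positivity
  rw [div_le_div_iff₀ hpos hpos]
  nlinarith [mul_le_mul_of_nonneg_right (mul_le_mul_of_nonneg_right h ht) hpos.le]

lemma pt_zero (t : ℝ) (n : ℕ) : pt t n 0 = 0 := by simp [pt]

lemma pt_last (ht : (0:ℝ) < t) (n : ℕ) : pt t n (n + 1) = t := by
  unfold pt; push_cast; field_simp

lemma pt_lt_succ (ht : 0 < t) : pt t n i < pt t n (i + 1) := by
  unfold pt; push_cast
  have hpos : (0:ℝ) < n + 1 := by positivity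
  rw [div_lt_div_iff₀ hpos hpos]
  nlinarith

lemma pt_nonneg (ht : 0 < t) : 0 ≤ pt t n i := by
  have := pt_mono (t := t) (n := n) ht.le (Nat.zero_le i)
  simpa [pt_zero] using this

lemma pt_le_t (ht : 0 < t) (hi' : i ≤ n + 1) : pt t n i ≤ t := by
  have := pt_mono (t := t) (n := n) ht.le hi'
  simpa [pt_last ht] using this

lemma pt_succ_sub (t : ℝ) (n i : ℕ) : pt t n (i + 1) - pt t n i = t / (n + 1) := by
  unfold pt; push_cast; ring

lemma bddAbove_img (hbv : BoundedVariationOn V (Set.Icc 0 t))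
    (hab : Set.Ioc a b ⊆ Set.Icc 0 t) (ht : 0 < t) : BddAbove (V '' Set.Ioc a b) := by
  refine ⟨V 0 + (eVariationOn V (Set.Icc 0 t)).toReal, ?_⟩
  rintro _ ⟨u, hu, rfl⟩
  have h0 : (0:ℝ) ∈ Set.Icc (0:ℝ) t := ⟨le_refl 0, ht.le⟩
  have := hbv.sub_le (hab hu) h0
  linarith

lemma bddBelow_img (hbv : BoundedVariationOn V (Set.Icc 0 t))
    (hab : Set.Ioc a b ⊆ Set.Icc 0 t) (ht : 0 < t) : BddBelow (V '' Set.Ioc a b) := by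
  refine ⟨V 0 - (eVariationOn V (Set.Icc 0 t)).toReal, ?_⟩
  rintro _ ⟨u, hu, rfl⟩
  have h0 : (0:ℝ) ∈ Set.Icc (0:ℝ) t := ⟨le_refl 0, ht.le⟩
  have := hbv.sub_le h0 (hab hu)
  linarith

lemma lo_le (hbv : BoundedVariationOn V (Set.Icc 0 t))
    (hab : Set.Ioc a b ⊆ Set.Icc 0 t) (ht : 0 < t) (hs : s ∈ Set.Ioc a b) :
    lo V a b ≤ V s :=
  csInf_le (bddBelow_img hbv hab ht) ⟨s, hs, rfl⟩

lemma le_hi (hbv : BoundedVariationOn V (Set.Icc 0 t))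
    (hab : Set.Ioc a b ⊆ Set.Icc 0 t) (ht : 0 < t) (hs : s ∈ Set.Ioc a b) :
    V s ≤ hi V a b :=
  le_csSup (bddAbove_img hbv hab ht) ⟨s, hs, rfl⟩

/-- The left limit at `s ∈ (a,b]` also lies in `[lo, hi]`. -/
lemma lo_le_leftLim {Vm : ℝ → ℝ}
    (hV_ll : Filter.Tendsto V (nhdsWithin s (Set.Iio s)) (nhds (Vm s)))
    (hbv : BoundedVariationOn V (Set.Icc 0 t))
    (hab : Set.Ioc a b ⊆ Set.Icc 0 t) (ht : 0 < t) (hs : s ∈ Set.Ioc a b) :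
    lo V a b ≤ Vm s ∧ Vm s ≤ hi V a b := by
  have hmem : Set.Ioo a s ∈ nhdsWithin s (Set.Iio s) := Ioo_mem_nhdsLT hs.1
  have hev : ∀ᶠ u in nhdsWithin s (Set.Iio s),
      V u ∈ Set.Icc (lo V a b) (hi V a b) := by
    filter_upwards [hmem] with u hu
    have hu' : u ∈ Set.Ioc a b := ⟨hu.1, hu.2.le.trans hs.2⟩
    exact ⟨lo_le hbv hab ht hu', le_hi hbv hab ht hu'⟩
  constructor
  · exact ge_of_tendsto hV_ll (hev.mono fun u hu => hu.1)
  · exact le_of_tendsto hV_ll (hev.mono fun u hu => hu.2)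

/-- Oscillation on a cell is at most the variation on the cell. -/
lemma ofReal_osc_le (hbv : BoundedVariationOn V (Set.Icc 0 t)) (ht : 0 < t)
    (ha : 0 ≤ a) (hab : a < b) (hb : b ≤ t) :
    ENNReal.ofReal (hi V a b - lo V a b) ≤ eVariationOn V (Set.Icc a b) := by
  have hsub : Set.Icc a b ⊆ Set.Icc 0 t := Set.Icc_subset_Icc ha hb
  have hfin : eVariationOn V (Set.Icc a b) ≠ ⊤ :=
    ne_top_of_le_ne_top hbv (eVariationOn.mono V hsub)
  have hne : (V '' Set.Ioc a b).Nonempty := ⟨V b, b, ⟨hab, le_refl b⟩, rfl⟩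
  have key : hi V a b - lo V a b ≤ (eVariationOn V (Set.Icc a b)).toReal := by
    refine le_of_forall_pos_le_add fun ε hε => ?_
    obtain ⟨_, ⟨p, hp, rfl⟩, hp2⟩ :=
      exists_lt_of_lt_csSup hne (show hi V a b - ε/2 < hi V a b by linarith)
    obtain ⟨_, ⟨q, hq, rfl⟩, hq2⟩ :=
      exists_lt_of_csInf_lt hne (show lo V a b < lo V a b + ε/2 by linarith)
    have hdist : V p - V q ≤ (eVariationOn V (Set.Icc a b)).toReal :=
      BoundedVariationOn.sub_le hfin (Set.Ioc_subset_Icc_self hp) (Set.Ioc_subset_Icc_self hq)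
    linarith
  calc ENNReal.ofReal (hi V a b - lo V a b)
      ≤ ENNReal.ofReal (eVariationOn V (Set.Icc a b)).toReal := ENNReal.ofReal_le_ofReal key
    _ = eVariationOn V (Set.Icc a b) := ENNReal.ofReal_toReal hfin

/-- The variations over the cells of the partition sum to at most the total variation. -/
lemma sum_eVar_pt_le (ht : 0 < t) :
    ∑ i ∈ Finset.range (n + 1), eVariationOn V (Set.Icc (pt t n i) (pt t n (i + 1)))
      ≤ eVariationOn V (Set.Icc 0 t) := by
  have key : ∀ k : ℕ,
      ∑ i ∈ Finset.range k, eVariationOn V (Set.Icc (pt t n i) (pt t n (i + 1)))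
        ≤ eVariationOn V (Set.Icc (pt t n 0) (pt t n k)) := by
    intro k
    induction k with
    | zero => simp
    | succ k ih =>
      rw [Finset.sum_range_succ]
      have h1 : pt t n 0 ≤ pt t n k := pt_mono ht.le (Nat.zero_le k)
      have h2 : pt t n k ≤ pt t n (k + 1) := pt_mono ht.le (Nat.le_succ k)
      have heq := eVariationOn.Icc_add_Icc V (s := Set.univ) h1 h2 (Set.mem_univ _)
      simp only [Set.univ_inter] at heq
      calc _ ≤ eVariationOn V (Set.Icc (pt t n 0) (pt t n k))
              + eVariationOn V (Set.Icc (pt t n k) (pt t n (k+1))) := by gcongr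
        _ = _ := heq
  have := key (n + 1)
  rwa [pt_zero, pt_last ht] at this

lemma fAp_measurable (V : ℝ → ℝ) (t : ℝ) (n : ℕ) : Measurable (fAp V t n) := by
  apply Finset.measurable_sum
  intro i _
  exact Measurable.indicator measurable_const measurableSet_Icc

/-- The integral of the partition-level count is at most the total variation. -/
lemma lintegral_fAp_le (hbv : BoundedVariationOn V (Set.Icc 0 t)) (ht : 0 < t) :
    ∫⁻ x, fAp V t n x ≤ eVariationOn V (Set.Icc 0 t) := by
  have hmeas : ∀ i ∈ Finset.range (n+1), Measurable fun x =>
      (Set.Icc (lo V (pt t n i) (pt t n (i + 1))) (hi V (pt t n i) (pt t n (i + 1)))).indicator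
      (1 : ℝ → ℝ≥0∞) x := fun i _ =>
    Measurable.indicator measurable_const measurableSet_Icc
  unfold fAp
  rw [lintegral_finset_sum _ hmeas]
  have heval : ∀ i ∈ Finset.range (n+1),
      (∫⁻ x, (Set.Icc (lo V (pt t n i) (pt t n (i + 1)))
        (hi V (pt t n i) (pt t n (i + 1)))).indicator (1 : ℝ → ℝ≥0∞) x)
      ≤ eVariationOn V (Set.Icc (pt t n i) (pt t n (i+1))) := by
    intro i hi'
    rw [lintegral_indicator_one measurableSet_Icc, Real.volume_Icc]
    exact ofReal_osc_le hbv ht (pt_nonneg ht) (pt_lt_succ ht)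
      (pt_le_t ht (by have := Finset.mem_range.mp hi'; omega : i + 1 ≤ n + 1))
  calc _ ≤ ∑ i ∈ Finset.range (n+1), eVariationOn V (Set.Icc (pt t n i) (pt t n (i+1))) :=
        Finset.sum_le_sum heval
    _ ≤ _ := sum_eVar_pt_le ht

/-- Every finite subset of the crossing set is eventually counted by `fAp`. -/
lemma card_le_fAp_eventually
    {Vm : ℝ → ℝ} (hV_ll : ∀ s ∈ Set.Ioi (0:ℝ), Tendsto V (nhdsWithin s (Set.Iio s)) (nhds (Vm s)))
    (hbv : BoundedVariationOn V (Set.Icc 0 t)) (ht : 0 < t) (x : ℝ)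
    (F : Finset ℝ) (hF : ↑F ⊆ crossSet V Vm x t) :
    ∀ᶠ n in atTop, (F.card : ℝ≥0∞) ≤ fAp V t n x := by
  classical
  -- a positive lower bound for gaps between distinct points of F
  obtain ⟨δ, hδ0, hδ⟩ : ∃ δ > 0, ∀ a ∈ F, ∀ b ∈ F, a ≠ b → δ ≤ |a - b| := by
    set S := (F ×ˢ F).filter (fun p => p.1 ≠ p.2) with hS
    rcases S.eq_empty_or_nonempty with hSe | hSne
    · refine ⟨1, one_pos, fun a ha b hb hab => ?_⟩
      exfalso
      have : (a, b) ∈ S := by simp [hS, Finset.mem_filter, Finset.mem_product, ha, hb, hab]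
      rw [hSe] at this
      exact Finset.notMem_empty _ this
    · refine ⟨S.inf' hSne (fun p => |p.1 - p.2|), ?_, fun a ha b hb hab => ?_⟩
      · rw [gt_iff_lt, Finset.lt_inf'_iff]
        rintro ⟨a, b⟩ hp
        simp only [hS, Finset.mem_filter] at hp
        exact abs_pos.mpr (sub_ne_zero.mpr hp.2)
      · exact Finset.inf'_le (fun p => |p.1 - p.2|) (show ((a,b) : ℝ × ℝ) ∈ S by
          simp [hS, Finset.mem_filter, Finset.mem_product, ha, hb, hab])
  obtain ⟨N, hN⟩ : ∃ N : ℕ, t / (N + 1) < δ := by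
    obtain ⟨N, hN⟩ := exists_nat_gt (t / δ)
    refine ⟨N, ?_⟩
    rw [div_lt_iff₀ (by positivity)]
    rw [div_lt_iff₀ hδ0] at hN
    nlinarith
  rw [eventually_atTop]
  refine ⟨N, fun n hn => ?_⟩
  have hmesh : t / (n + 1) < δ := by
    refine lt_of_le_of_lt ?_ hN
    apply div_le_div_of_nonneg_left ht.le (by positivity)
    exact_mod_cast Nat.succ_le_succ hn
  -- index of the cell containing s
  set idx : ℝ → ℕ := fun s => Nat.findGreatest (fun i => pt t n i < s) n with hidx
  have hmem : ∀ s ∈ F, s ∈ Set.Ioc (pt t n (idx s)) (pt t n (idx s + 1)) := by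
    intro s hs
    have hcs := hF hs
    have hs0 : 0 < s := hcs.1
    have hst : s ≤ t := hcs.2.1
    constructor
    · exact Nat.findGreatest_spec (P := fun i => pt t n i < s) (Nat.zero_le n)
        (by simpa [pt_zero] using hs0)
    · rcases eq_or_lt_of_le (Nat.findGreatest_le (P := fun i => pt t n i < s) n) with h | h
      · show s ≤ pt t n (idx s + 1)
        rw [show idx s = n from h, pt_last ht]
        exact hst
      · by_contra hcon
        push_neg at hcon
        exact (Nat.findGreatest_is_greatest (P := fun i => pt t n i < s)
          (Nat.lt_succ_self _) (Nat.succ_le_of_lt h)) hcon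
  have hsubcell : ∀ s ∈ F, Set.Ioc (pt t n (idx s)) (pt t n (idx s + 1)) ⊆ Set.Icc 0 t := by
    intro s _
    refine Set.Ioc_subset_Icc_self.trans (Set.Icc_subset_Icc (pt_nonneg ht) ?_)
    exact pt_le_t ht (Nat.succ_le_succ (Nat.findGreatest_le n))
  -- x lies in the oscillation interval of the cell of s
  have hxmem : ∀ s ∈ F, x ∈ Set.Icc (lo V (pt t n (idx s)) (pt t n (idx s + 1)))
      (hi V (pt t n (idx s)) (pt t n (idx s + 1))) := by
    intro s hs
    have hcs := hF hs
    have h1 := lo_le hbv (hsubcell s hs) ht (hmem s hs)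
    have h2 := le_hi hbv (hsubcell s hs) ht (hmem s hs)
    have h3 := lo_le_leftLim (hV_ll s hcs.1) hbv (hsubcell s hs) ht (hmem s hs)
    rcases hcs.2.2 with ⟨hl, hr⟩ | ⟨hl, hr⟩
    · exact ⟨h3.1.trans hl, hr.trans h2⟩
    · exact ⟨h1.trans hl, hr.trans h3.2⟩
  -- idx is injective on F
  have hinj : Set.InjOn idx ↑F := by
    intro a ha b hb hab
    by_contra hne
    have hma := hmem a ha
    have hmb := hmem b hb
    rw [hab] at hma
    have hlen : |a - b| ≤ t / (n + 1) := by
      rw [← pt_succ_sub t n (idx b)]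
      rw [abs_le]
      constructor <;> [skip; skip] <;>
        · cases hma with | intro h1 h2 => cases hmb with | intro h3 h4 => linarith
    have := hδ a ha b hb hne
    linarith
  -- conclude by counting
  have himage : F.image idx ⊆ Finset.range (n + 1) := by
    intro i hi'
    obtain ⟨s, _, rfl⟩ := Finset.mem_image.mp hi'
    exact Finset.mem_range.mpr (Nat.lt_succ_of_le (Nat.findGreatest_le n))
  have hcard : (F.image idx).card = F.card := Finset.card_image_of_injOn hinj
  calc (F.card : ℝ≥0∞) = ∑ i ∈ F.image idx, (1 : ℝ≥0∞) := by
        rw [Finset.sum_const, hcard]; simp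
    _ = ∑ i ∈ F.image idx,
          (Set.Icc (lo V (pt t n i) (pt t n (i + 1))) (hi V (pt t n i) (pt t n (i + 1)))).indicator
            (1 : ℝ → ℝ≥0∞) x := by
        refine Finset.sum_congr rfl fun i hi' => ?_
        obtain ⟨s, hs, rfl⟩ := Finset.mem_image.mp hi'
        rw [Set.indicator_of_mem (hxmem s hs)]
        rfl
    _ ≤ fAp V t n x := Finset.sum_le_sum_of_subset himage

end CrossAux

/-- For a càdlàg function `V` on `[0,∞)` of finite variation on compacts,
with `W(t)` the total variation of `V` on `[0,t]` and
`N_x(t) = Card{0 < s ≤ t : V(s−) ≤ x ≤ V(s) or V(s) ≤ x ≤ V(s−)}`, one has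
`∫_ℝ N_x(t) dx ≤ W(t) < ∞` for every `t > 0`. -/
theorem lintegral_crossings_le_variation
    (V Vm : ℝ → ℝ)
    (hV_rc : ∀ s ∈ Set.Ici (0 : ℝ), ContinuousWithinAt V (Set.Ici s) s)
    (hV_ll : ∀ s ∈ Set.Ioi (0 : ℝ),
      Filter.Tendsto V (nhdsWithin s (Set.Iio s)) (nhds (Vm s)))
    (hV_bv : ∀ T : ℝ, BoundedVariationOn V (Set.Icc 0 T))
    (t : ℝ) (ht : 0 < t) :
    (∫⁻ x : ℝ, ((crossSet V Vm x t).encard : ℝ≥0∞) ∂volume) ≤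
        eVariationOn V (Set.Icc 0 t) ∧
      eVariationOn V (Set.Icc 0 t) < ⊤ := by
  have hbv := hV_bv t
  refine ⟨?_, lt_top_iff_ne_top.mpr hbv⟩
  have hpoint : ∀ x : ℝ, ((crossSet V Vm x t).encard : ℝ≥0∞) ≤
      liminf (fun n => CrossAux.fAp V t n x) atTop := by
    intro x
    have hfin_le : ∀ F : Finset ℝ, ↑F ⊆ crossSet V Vm x t →
        (F.card : ℝ≥0∞) ≤ liminf (fun n => CrossAux.fAp V t n x) atTop := fun F hF =>
      Filter.le_liminf_of_le (by isBoundedDefault)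
        (CrossAux.card_le_fAp_eventually hV_ll hbv ht x F hF)
    rcases (crossSet V Vm x t).finite_or_infinite with hfin | hinf
    · rw [hfin.encard_eq_coe_toFinset_card]
      have := hfin_le hfin.toFinset (by simp)
      simpa using this
    · rw [hinf.encard_eq]
      refine le_of_not_gt fun hlt => ?_
      obtain ⟨k, hk⟩ := ENNReal.exists_nat_gt (by simpa using hlt.ne)
      obtain ⟨F, hFsub, hFcard⟩ := hinf.exists_subset_card_eq k
      have hle := hfin_le F hFsub
      rw [hFcard] at hle
      exact absurd (hle.trans_lt hk) (lt_irrefl _)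
  calc (∫⁻ x : ℝ, ((crossSet V Vm x t).encard : ℝ≥0∞) ∂volume)
      ≤ ∫⁻ x, liminf (fun n => CrossAux.fAp V t n x) atTop ∂volume := lintegral_mono hpoint
    _ ≤ liminf (fun n => ∫⁻ x, CrossAux.fAp V t n x ∂volume) atTop :=
        lintegral_liminf_le fun n => CrossAux.fAp_measurable V t n
    _ ≤ eVariationOn V (Set.Icc 0 t) := by
        refine le_trans (Filter.liminf_le_liminf (Filter.Eventually.of_forall
          fun n => CrossAux.lintegral_fAp_le hbv ht)) ?_
        simp [Filter.liminf_const]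
end
end

section
/- Let V : [0,∞) → ℝ be a right-continuous function with left limits, of finite variation on every compact interval, and let t > 0. For x ∈ ℝ set N_x(t) = Card{0 < s ≤ t : V(s−) ≤ x ≤ V(s) or V(s) ≤ x ≤ V(s−)}. Then for Lebesgue-almost every x ∈ ℝ, N_x(t) < ∞; in particular, for Lebesgue-almost every x, the set {0 < s ≤ t : V(s−) ≤ x ≤ V(s) or V(s) ≤ x ≤ V(s−)} is finite. -/
open MeasureTheory Set Filter
open scoped ENNReal NNReal

noncomputable section

private lemma bdd_of_bv (V : ℝ → ℝ) {a b : ℝ} (hab : a ≤ b)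
    (hbv : BoundedVariationOn V (Set.Icc a b)) :
    BddAbove (V '' Set.Icc a b) ∧ BddBelow (V '' Set.Icc a b) := by
  set D := (eVariationOn V (Set.Icc a b)).toReal with hD
  have ha : a ∈ Set.Icc a b := ⟨le_rfl, hab⟩
  constructor
  · refine ⟨V a + D, ?_⟩
    rintro y ⟨u, hu, rfl⟩
    have h := hbv.dist_le hu ha
    rw [Real.dist_eq, abs_le] at h
    linarith [h.2]
  · refine ⟨V a - D, ?_⟩
    rintro y ⟨u, hu, rfl⟩
    have h := hbv.dist_le hu ha
    rw [Real.dist_eq, abs_le] at h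
    linarith [h.1]

private lemma crossing_mem_Icc (V Vm : ℝ → ℝ)
    (hV_ll : ∀ s ∈ Set.Ioi (0 : ℝ),
      Filter.Tendsto V (nhdsWithin s (Set.Iio s)) (nhds (Vm s)))
    (hV_bv : ∀ T : ℝ, BoundedVariationOn V (Set.Icc 0 T))
    {a b x s : ℝ} (ha : 0 ≤ a) (has : a < s) (hsb : s ≤ b)
    (hx : (Vm s ≤ x ∧ x ≤ V s) ∨ (V s ≤ x ∧ x ≤ Vm s)) :
    x ∈ Set.Icc (sInf (V '' Set.Icc a b)) (sSup (V '' Set.Icc a b)) := by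
  have hab : a ≤ b := has.le.trans hsb
  have hbv : BoundedVariationOn V (Set.Icc a b) :=
    (hV_bv b).mono (Set.Icc_subset_Icc ha le_rfl)
  obtain ⟨bddA, bddB⟩ := bdd_of_bv V hab hbv
  have hmem : s ∈ Set.Icc a b := ⟨has.le, hsb⟩
  have hVs_le : V s ≤ sSup (V '' Set.Icc a b) := le_csSup bddA ⟨s, hmem, rfl⟩
  have hle_Vs : sInf (V '' Set.Icc a b) ≤ V s := csInf_le bddB ⟨s, hmem, rfl⟩
  have hs0 : s ∈ Set.Ioi (0 : ℝ) := lt_of_le_of_lt ha has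
  have hIoo : Set.Ioo a s ∈ nhdsWithin s (Set.Iio s) :=
    Ioo_mem_nhdsLT_of_mem ⟨has, le_rfl⟩
  have hVm_le : Vm s ≤ sSup (V '' Set.Icc a b) := by
    refine le_of_tendsto (hV_ll s hs0) ?_
    filter_upwards [hIoo] with u hu
    exact le_csSup bddA ⟨u, ⟨hu.1.le, hu.2.le.trans hsb⟩, rfl⟩
  have hle_Vm : sInf (V '' Set.Icc a b) ≤ Vm s := by
    refine ge_of_tendsto (hV_ll s hs0) ?_
    filter_upwards [hIoo] with u hu
    exact csInf_le bddB ⟨u, ⟨hu.1.le, hu.2.le.trans hsb⟩, rfl⟩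
  rcases hx with ⟨h1, h2⟩ | ⟨h1, h2⟩ <;> exact ⟨by linarith, by linarith⟩

private lemma volume_Icc_le (V : ℝ → ℝ) {a b : ℝ} (hab : a ≤ b)
    (hbv : BoundedVariationOn V (Set.Icc a b)) :
    volume (Set.Icc (sInf (V '' Set.Icc a b)) (sSup (V '' Set.Icc a b)))
      ≤ eVariationOn V (Set.Icc a b) := by
  obtain ⟨bddA, bddB⟩ := bdd_of_bv V hab hbv
  have hne : (V '' Set.Icc a b).Nonempty := ⟨V a, a, ⟨le_rfl, hab⟩, rfl⟩
  set D := (eVariationOn V (Set.Icc a b)).toReal with hD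
  have hsub : sSup (V '' Set.Icc a b) - sInf (V '' Set.Icc a b) ≤ D := by
    rw [sub_le_iff_le_add]
    refine csSup_le hne ?_
    rintro y ⟨u, hu, rfl⟩
    rw [add_comm, ← sub_le_iff_le_add]
    refine le_csInf hne ?_
    rintro z ⟨v, hv, rfl⟩
    have h := hbv.dist_le hu hv
    rw [Real.dist_eq, abs_le] at h
    linarith [h.2]
  rw [Real.volume_Icc, ← ENNReal.ofReal_toReal hbv]
  exact ENNReal.ofReal_le_ofReal hsub

private lemma sum_evar_le (V : ℝ → ℝ) {t : ℝ} (ht : 0 < t) (m : ℕ) :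
    ∑ i ∈ Finset.range m,
        eVariationOn V (Set.Icc ((i : ℝ) * t / m) (((i : ℝ) + 1) * t / m))
      ≤ eVariationOn V (Set.Icc 0 t) := by
  rcases Nat.eq_zero_or_pos m with rfl | hm
  · simp
  have hm' : (0 : ℝ) < m := by exact_mod_cast hm
  have key : ∀ k : ℕ, k ≤ m →
      ∑ i ∈ Finset.range k,
          eVariationOn V (Set.Icc ((i : ℝ) * t / m) (((i : ℝ) + 1) * t / m))
        = eVariationOn V (Set.Icc 0 ((k : ℝ) * t / m)) := by
    intro k
    induction k with
    | zero =>
      intro _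
      simp only [Finset.sum_range_zero, Nat.cast_zero, zero_mul, zero_div]
      rw [Set.Icc_self]
      exact (eVariationOn.subsingleton V Set.subsingleton_singleton).symm
    | succ k ih =>
      intro hk
      have h1 : (0 : ℝ) ≤ (k : ℝ) * t / m := by positivity
      have h2 : (k : ℝ) * t / m ≤ ((k : ℝ) + 1) * t / m := by
        gcongr
        linarith
      have heq := eVariationOn.Icc_add_Icc (s := (Set.univ : Set ℝ)) V h1 h2
        (Set.mem_univ ((k : ℝ) * t / m))
      simp only [Set.univ_inter] at heq
      rw [Finset.sum_range_succ, ih (Nat.le_of_succ_le hk), Nat.cast_succ, heq]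
  have hfin := key m le_rfl
  rw [hfin]
  have : (m : ℝ) * t / m = t := by field_simp
  rw [this]

/-- For a càdlàg function `V` on `[0,∞)` of finite variation on compacts
and `t > 0`, for Lebesgue-almost every `x ∈ ℝ` the set
`{0 < s ≤ t : V(s−) ≤ x ≤ V(s) or V(s) ≤ x ≤ V(s−)}` is finite, i.e. `N_x(t) < ∞`. -/
theorem ae_finitely_many_crossings
    (V Vm : ℝ → ℝ)
    (hV_rc : ∀ s ∈ Set.Ici (0 : ℝ), ContinuousWithinAt V (Set.Ici s) s)
    (hV_ll : ∀ s ∈ Set.Ioi (0 : ℝ),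
      Filter.Tendsto V (nhdsWithin s (Set.Iio s)) (nhds (Vm s)))
    (hV_bv : ∀ T : ℝ, BoundedVariationOn V (Set.Icc 0 T))
    (t : ℝ) (ht : 0 < t) :
    ∀ᵐ x : ℝ ∂volume, (crossSet V Vm x t).Finite := by
  classical
  set C := eVariationOn V (Set.Icc 0 t) with hCdef
  have hCne : C ≠ ⊤ := hV_bv t
  -- the partition intervals and their value ranges
  set S : ℕ → ℕ → Set ℝ := fun m i =>
    Set.Icc (sInf (V '' Set.Icc ((i : ℝ) * t / m) (((i : ℝ) + 1) * t / m)))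
      (sSup (V '' Set.Icc ((i : ℝ) * t / m) (((i : ℝ) + 1) * t / m))) with hSdef
  set f : ℕ → ℝ → ℝ≥0∞ := fun m x =>
    ∑ i ∈ Finset.range m, (S m i).indicator 1 x with hfdef
  have hfmeas : ∀ m, Measurable (f m) := by
    intro m
    exact Finset.measurable_sum _ fun i _ => measurable_one.indicator measurableSet_Icc
  -- the basic variation bound on each partition interval
  have hab : ∀ m i : ℕ, (i : ℝ) * t / m ≤ ((i : ℝ) + 1) * t / m := by
    intro m i
    rcases Nat.eq_zero_or_pos m with rfl | hm
    · simp
    have hm' : (0 : ℝ) < m := by exact_mod_cast hm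
    gcongr
    linarith
  have hbvi : ∀ m i : ℕ,
      BoundedVariationOn V (Set.Icc ((i : ℝ) * t / m) (((i : ℝ) + 1) * t / m)) := by
    intro m i
    have h0 : (0 : ℝ) ≤ (i : ℝ) * t / m := by positivity
    exact (hV_bv (((i : ℝ) + 1) * t / m)).mono (Set.Icc_subset_Icc h0 le_rfl)
  -- Markov inequality for f m
  have hmark : ∀ m k : ℕ, (k : ℝ≥0∞) * volume {x | (k : ℝ≥0∞) ≤ f m x} ≤ C := by
    intro m k
    have h1 := mul_meas_ge_le_lintegral (μ := volume) (hfmeas m) (k : ℝ≥0∞)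
    refine h1.trans ?_
    have h2 : ∫⁻ x, f m x = ∑ i ∈ Finset.range m, volume (S m i) := by
      rw [hfdef]
      simp only
      rw [lintegral_finset_sum _ fun i _ => measurable_one.indicator measurableSet_Icc]
      exact Finset.sum_congr rfl fun i _ => lintegral_indicator_one measurableSet_Icc
    rw [h2]
    refine le_trans (Finset.sum_le_sum fun i _ => ?_) (sum_evar_le V ht m)
    exact volume_Icc_le V (hab m i) (hbvi m i)
  -- the core claim: infinitely many crossings force x into many value ranges
  have core : ∀ (j : ℕ) (x : ℝ), (crossSet V Vm x t).Infinite →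
      ∃ M : ℕ, ∀ m, M ≤ m → ((j + 2 : ℕ) : ℝ≥0∞) ≤ f m x := by
    intro j x hx
    obtain ⟨T, hTsub, hTcard⟩ := hx.exists_subset_card_eq (j + 2)
    have hT2 : 1 < T.card := by omega
    obtain ⟨s₁, hs₁, s₂, hs₂, hne12⟩ := Finset.one_lt_card.mp hT2
    have hPne : T.offDiag.Nonempty := ⟨(s₁, s₂), Finset.mem_offDiag.mpr ⟨hs₁, hs₂, hne12⟩⟩
    set δ : ℝ := T.offDiag.inf' hPne (fun p => |p.1 - p.2|) with hδdef
    have hδpos : 0 < δ := by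
      rw [hδdef, Finset.lt_inf'_iff]
      rintro ⟨p, q⟩ hpq
      have := (Finset.mem_offDiag.mp hpq).2.2
      simpa [abs_pos, sub_ne_zero] using this
    refine ⟨⌈t / δ⌉₊ + 1, ?_⟩
    intro m hm
    have hm1 : 1 ≤ m := le_trans (Nat.le_add_left 1 _) hm
    have hm' : (0 : ℝ) < m := by exact_mod_cast hm1
    have hmesh : t / m < δ := by
      have h1 : t / δ < (⌈t / δ⌉₊ + 1 : ℝ) := lt_of_le_of_lt (Nat.le_ceil _) (by linarith)
      have h2 : t / δ < (m : ℝ) := lt_of_lt_of_le h1 (by exact_mod_cast hm)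
      rw [div_lt_iff₀ hm']
      rw [div_lt_iff₀ hδpos] at h2
      nlinarith
    -- index of a crossing time
    set idx : ℝ → ℕ := fun s => ⌈s * m / t⌉₊ - 1 with hidxdef
    have hidx : ∀ s ∈ T, idx s < m ∧
        (idx s : ℝ) * t / m < s ∧ s ≤ ((idx s : ℝ) + 1) * t / m := by
      intro s hsT
      obtain ⟨hs0, hst, -⟩ := hTsub hsT
      have hr0 : 0 < s * m / t := by positivity
      have hceil1 : 1 ≤ ⌈s * m / t⌉₊ := Nat.ceil_pos.mpr hr0
      have hcast : ((idx s : ℕ) : ℝ) = (⌈s * m / t⌉₊ : ℝ) - 1 := by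
        rw [hidxdef]
        push_cast [hceil1]
        ring
      have hceilm : ⌈s * m / t⌉₊ ≤ m := by
        rw [Nat.ceil_le]
        rw [div_le_iff₀ ht]
        push_cast
        nlinarith
      have hidx_eq : idx s = ⌈s * m / t⌉₊ - 1 := rfl
      refine ⟨by omega, ?_, ?_⟩
      · -- lower bound
        have h1 : ((⌈s * m / t⌉₊ : ℝ) - 1) < s * m / t := by
          have := Nat.ceil_lt_add_one hr0.le
          linarith
        rw [hcast, div_lt_iff₀ hm']
        exact (lt_div_iff₀ ht).mp h1
      · -- upper bound
        have h1 : s * m / t ≤ (⌈s * m / t⌉₊ : ℝ) := Nat.le_ceil _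
        have h2 : s * m ≤ (⌈s * m / t⌉₊ : ℝ) * t := (div_le_iff₀ ht).mp h1
        rw [le_div_iff₀ hm', hcast]
        nlinarith
    have hinj : Set.InjOn idx T := by
      intro s hs s' hs' heq
      by_contra hne
      have hmem2 : (s, s') ∈ T.offDiag := Finset.mem_offDiag.mpr
        ⟨Finset.mem_coe.mp hs, Finset.mem_coe.mp hs', hne⟩
      have hδle : δ ≤ |s - s'| := by
        exact Finset.inf'_le (fun p => |p.1 - p.2|) hmem2
      obtain ⟨-, hlo, hhi⟩ := hidx s hs
      obtain ⟨-, hlo', hhi'⟩ := hidx s' hs'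
      rw [heq] at hlo hhi
      have habs : |s - s'| < t / m := by
        rw [abs_sub_lt_iff]
        constructor
        · have : ((idx s' : ℝ) + 1) * t / m - (idx s' : ℝ) * t / m = t / m := by ring
          linarith
        · have : ((idx s' : ℝ) + 1) * t / m - (idx s' : ℝ) * t / m = t / m := by ring
          linarith
      linarith
    have hmemS : ∀ s ∈ T, x ∈ S m (idx s) := by
      intro s hsT
      obtain ⟨-, hlo, hhi⟩ := hidx s hsT
      have h0 : (0 : ℝ) ≤ (idx s : ℝ) * t / m := by positivity
      exact crossing_mem_Icc V Vm hV_ll hV_bv h0 hlo hhi (hTsub hsT).2.2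
    -- count
    set J : Finset ℕ := T.image idx with hJdef
    have hJcard : J.card = j + 2 := by
      rw [hJdef, Finset.card_image_of_injOn hinj, hTcard]
    have hJsub : J ⊆ Finset.range m := by
      intro i hi
      obtain ⟨s, hsT, rfl⟩ := Finset.mem_image.mp hi
      exact Finset.mem_range.mpr (hidx s hsT).1
    have hle : ∑ i ∈ J, (S m i).indicator (1 : ℝ → ℝ≥0∞) x ≤ f m x := by
      rw [hfdef]
      exact Finset.sum_le_sum_of_subset hJsub
    have heach : ∀ i ∈ J, (S m i).indicator (1 : ℝ → ℝ≥0∞) x = 1 := by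
      intro i hi
      obtain ⟨s, hsT, rfl⟩ := Finset.mem_image.mp hi
      rw [Set.indicator_of_mem (hmemS s hsT)]
      rfl
    calc ((j + 2 : ℕ) : ℝ≥0∞) = ∑ i ∈ J, (S m i).indicator (1 : ℝ → ℝ≥0∞) x := by
          rw [Finset.sum_congr rfl heach]
          simp [hJcard]
      _ ≤ f m x := hle
  -- put things together
  set B : Set ℝ := {x | ¬ (crossSet V Vm x t).Finite} with hBdef
  have hBle : ∀ j : ℕ, volume B ≤ C / ((j + 2 : ℕ) : ℝ≥0∞) := by
    intro j
    set U : ℕ → Set ℝ := fun m => {x | ((j + 2 : ℕ) : ℝ≥0∞) ≤ f m x} with hUdef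
    set A : ℕ → Set ℝ := fun M => ⋂ m, ⋂ (_ : M ≤ m), U m with hAdef
    have hmono : Monotone A := by
      intro M M' hMM' x hx
      simp only [hAdef, Set.mem_iInter] at hx ⊢
      intro m hm
      exact hx m (hMM'.trans hm)
    have hBsub : B ⊆ ⋃ M, A M := by
      intro x hx
      obtain ⟨M, hM⟩ := core j x hx
      refine Set.mem_iUnion.mpr ⟨M, ?_⟩
      simp only [hAdef, Set.mem_iInter]
      intro m hm
      exact hM m hm
    have hUvol : ∀ m, volume (U m) ≤ C / ((j + 2 : ℕ) : ℝ≥0∞) := by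
      intro m
      have hk0 : ((j + 2 : ℕ) : ℝ≥0∞) ≠ 0 := by
        simp
      have hktop : ((j + 2 : ℕ) : ℝ≥0∞) ≠ ⊤ := ENNReal.natCast_ne_top _
      rw [ENNReal.le_div_iff_mul_le (Or.inl hk0) (Or.inl hktop), mul_comm]
      exact hmark m (j + 2)
    calc volume B ≤ volume (⋃ M, A M) := measure_mono hBsub
      _ = ⨆ M, volume (A M) := hmono.measure_iUnion
      _ ≤ C / ((j + 2 : ℕ) : ℝ≥0∞) := by
          refine iSup_le fun M => ?_
          refine le_trans (measure_mono ?_) (hUvol M)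
          intro x hx
          simp only [hAdef, Set.mem_iInter] at hx
          exact hx M le_rfl
  have hB0 : volume B = 0 := by
    by_contra hB0
    have hBfin : volume B ≠ ⊤ := by
      intro habs
      have h := hBle 0
      rw [habs] at h
      have hfin2 : C / ((0 + 2 : ℕ) : ℝ≥0∞) ≠ ⊤ :=
        (ENNReal.div_lt_top hCne (by norm_num)).ne
      exact hfin2 (top_le_iff.mp h)
    obtain ⟨n, hn⟩ := ENNReal.exists_nat_gt (ENNReal.div_lt_top hCne hB0).ne
    have h1 : C < (n : ℝ≥0∞) * volume B :=
      (ENNReal.div_lt_iff (Or.inl hB0) (Or.inl hBfin)).mp hn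
    have h2 : ((n + 2 : ℕ) : ℝ≥0∞) * volume B ≤ C := by
      have := hBle n
      rw [ENNReal.le_div_iff_mul_le (Or.inl (by simp)) (Or.inl (ENNReal.natCast_ne_top _))]
        at this
      rwa [mul_comm] at this
    have h3 : (n : ℝ≥0∞) * volume B ≤ ((n + 2 : ℕ) : ℝ≥0∞) * volume B := by
      gcongr
      exact_mod_cast Nat.le_add_right n 2
    exact absurd ((h1.trans_le h3).trans_le h2) (lt_irrefl C)
  rw [ae_iff]
  exact hB0

end
end

section
/- Let V : [0,∞) → ℝ be a right-continuous function with left limits, of finite variation on every compact interval. Let t > 0 and let x be a simple level for V with x ≠ V(0) and x ≠ V(t). Then 1_{[x,∞)}(V(t)) = 1_{[x,∞)}(V(0)) + ℓ^x(t) + Σ_{0<s≤t} ( 1_{[x,∞)}(V(s)) − 1_{[x,∞)}(V(s−)) ), where the sum has only finitely many nonzero terms. -/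
/-!
Call `u > 0` a crossing time of the level `x` if `V u = x` or `V` jumps over `x` at `u`. For a
simple level there are finitely many crossing times in every `(a, b]`, and between two of them
`V` stays strictly on one side of `x`: a càdlàg path that starts below `x` and later reaches
`[x, ∞)` does so for the first time at a crossing time, because no jump ends at `x`. So
`1_{[x,∞)} ∘ V` only changes at crossing times. At a jump over `x` the change is the jump term
`1_{[x,∞)}(V u) - 1_{[x,∞)}(V u-)`; where `V u = x` the path is continuous, the jump term vanishes
and the change is `+1`, `-1` or `0` according as `V` increases through, decreases through or only
touches `x`. Adding up over the crossing times in `(0, t]` gives the formula.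
-/

open MeasureTheory Set Filter
open scoped ENNReal NNReal

noncomputable section

/-- `V` increases through the level `x` at time `t`: `t > 0`, `V t = x`, `V` is continuous
at `t` (within the domain `[0,∞)`), and `V s - V t` has the same sign as `s - t` for all
`s ≥ 0` in some neighborhood of `t`. -/
def IncreasesThrough (V : ℝ → ℝ) (x t : ℝ) : Prop :=
  0 < t ∧ V t = x ∧ ContinuousWithinAt V (Set.Ici 0) t ∧
    ∃ ε > 0, ∀ s ∈ Set.Ici (0 : ℝ), |s - t| < ε →
      ((s < t → V s < V t) ∧ (t < s → V t < V s))

/-- `V` decreases through the level `x` at time `t` iff `-V` increases through `-x` at `t`. -/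
def DecreasesThrough (V : ℝ → ℝ) (x t : ℝ) : Prop :=
  IncreasesThrough (fun s => -V s) (-x) t

/-- `(0,t] ∩ ℐ(x)`: the increasing passage times of `V` through `x` up to time `t`. -/
def incSet (V : ℝ → ℝ) (x t : ℝ) : Set ℝ :=
  {s | s ∈ Set.Ioc 0 t ∧ IncreasesThrough V x s}

/-- `(0,t] ∩ 𝒟(x)`: the decreasing passage times of `V` through `x` up to time `t`. -/
def decSet (V : ℝ → ℝ) (x t : ℝ) : Set ℝ :=
  {s | s ∈ Set.Ioc 0 t ∧ DecreasesThrough V x s}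

/-- The signed local time `ℓ^x(t) = Card((0,t] ∩ ℐ(x)) − Card((0,t] ∩ 𝒟(x))`
(meaningful when both sets are finite). -/
def signedLocalTime (V : ℝ → ℝ) (x t : ℝ) : ℤ :=
  ((incSet V x t).ncard : ℤ) - ((decSet V x t).ncard : ℤ)

/-- The absolute local time `λ^x(t) = Card((0,t] ∩ ℐ(x)) + Card((0,t] ∩ 𝒟(x))`
(meaningful when both sets are finite). -/
def absLocalTime (V : ℝ → ℝ) (x t : ℝ) : ℕ :=
  (incSet V x t).ncard + (decSet V x t).ncard

open Topology SignType

def heaviside (x : ℝ) : ℝ → ℝ := (Ici x).indicator fun _ => 1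

lemma heaviside_eq_of_ne {x y : ℝ} (h : y ≠ x) : heaviside x y = (1 + sign (y - x)) / 2 := by
  rcases h.lt_or_gt with h | h
  · simp [heaviside, h.not_ge, sign_neg (sub_neg.2 h)]
  · simp [heaviside, h.le, sign_pos (sub_pos.2 h)]

def crossingSet (V Vm : ℝ → ℝ) (x : ℝ) : Set ℝ :=
  {u | 0 < u ∧ ((Vm u < x ∧ x < V u) ∨ (V u < x ∧ x < Vm u) ∨ V u = x)}

def passageSign (V : ℝ → ℝ) (x u : ℝ) : ℝ :=
  {s | IncreasesThrough V x s}.indicator 1 u - {s | DecreasesThrough V x s}.indicator 1 u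

def crossingWeight (V Vm : ℝ → ℝ) (x u : ℝ) : ℝ :=
  passageSign V x u + (heaviside x (V u) - heaviside x (Vm u))

structure IsCadlag (V Vm : ℝ → ℝ) : Prop where
  continuousWithinAt_Ici : ∀ s ∈ Ici (0 : ℝ), ContinuousWithinAt V (Ici s) s
  tendsto_nhdsLT : ∀ s ∈ Ioi (0 : ℝ), Tendsto V (𝓝[<] s) (𝓝 (Vm s))

section

variable {V Vm : ℝ → ℝ} {x u : ℝ}

lemma IncreasesThrough.mem_crossingSet (h : IncreasesThrough V x u) :
    u ∈ crossingSet V Vm x :=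
  ⟨h.1, .inr (.inr h.2.1)⟩

lemma DecreasesThrough.mem_crossingSet (h : DecreasesThrough V x u) :
    u ∈ crossingSet V Vm x :=
  ⟨h.1, .inr (.inr (neg_inj.1 h.2.1))⟩

lemma ne_of_notMem_crossingSet (hu : 0 < u) (h : u ∉ crossingSet V Vm x) : V u ≠ x :=
  fun hVu => h ⟨hu, .inr (.inr hVu)⟩

lemma passageSign_eq_zero_of_ne (h : V u ≠ x) : passageSign V x u = 0 := by
  have hI : ¬IncreasesThrough V x u := fun hI => h hI.2.1
  have hD : ¬DecreasesThrough V x u := fun hD => h (neg_inj.1 hD.2.1)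
  simp [passageSign, hI, hD]

lemma crossingSet_neg :
    crossingSet (fun s => -V s) (fun s => -Vm s) (-x) = crossingSet V Vm x := by
  ext u
  simp only [crossingSet, mem_ofPred_eq, neg_lt_neg_iff, neg_inj]
  tauto

lemma SimpleLevel.finite_inter_Ioc (hx : SimpleLevel V Vm x) (a b : ℝ) :
    (crossingSet V Vm x ∩ Ioc a b).Finite := by
  by_contra h
  obtain ⟨p, hp, hacc⟩ := (Set.not_finite.1 h).exists_accPt_of_subset_isCompact isCompact_Icc
    (fun v hv => ⟨hv.1.1.le, hv.2.2⟩ : crossingSet V Vm x ∩ Ioc a b ⊆ Icc 0 b)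
  exact hx.1 p hp.1 (hacc.mono (principal_mono.2 inter_subset_left))

lemma SimpleLevel.leftLim_eq_iff (hx : SimpleLevel V Vm x) (hu : 0 < u) :
    Vm u = x ↔ V u = x := by
  have : u ∉ {u : ℝ | 0 < u ∧ V u ≠ Vm u ∧ (x = V u ∨ x = Vm u)} := hx.2 ▸ notMem_empty u
  grind

lemma IsCadlag.neg (hV : IsCadlag V Vm) : IsCadlag (fun s => -V s) (fun s => -Vm s) :=
  ⟨fun s hs => (hV.continuousWithinAt_Ici s hs).neg, fun s hs => (hV.tendsto_nhdsLT s hs).neg⟩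

lemma IsCadlag.continuousAt (hV : IsCadlag V Vm) (hu : 0 < u) (h : Vm u = V u) :
    ContinuousAt V u := by
  rw [ContinuousAt, ← nhdsLT_sup_nhdsGE u, tendsto_sup]
  exact ⟨h ▸ hV.tendsto_nhdsLT u hu, hV.continuousWithinAt_Ici u hu.le⟩

lemma exists_mem_crossingSet_Ioc_of_lt_of_le (hV : IsCadlag V Vm)
    (hjump : ∀ u > 0, Vm u = x → V u = x) {a b : ℝ} (ha : 0 ≤ a) (hab : a < b)
    (hVa : V a < x) (hVb : x ≤ V b) : ∃ u ∈ Ioc a b, u ∈ crossingSet V Vm x := by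
  set A : Set ℝ := {s | s ∈ Icc a b ∧ x ≤ V s}
  have hbA : b ∈ A := ⟨⟨hab.le, le_rfl⟩, hVb⟩
  have hA : BddBelow A := ⟨a, fun s hs => hs.1.1⟩
  -- the first time in `[a, b]` at which `V` reaches `[x, ∞)`
  set u := sInf A
  have hub : u ≤ b := csInf_le hA hbA
  have hau : a < u := by
    obtain ⟨d, had, hd⟩ := mem_nhdsGE_iff_exists_Ico_subset.1
      ((hV.continuousWithinAt_Ici a ha).eventually_lt_const hVa)
    exact had.trans_le <| le_csInf ⟨b, hbA⟩ fun s hs =>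
      not_lt.1 fun hsd => (hd ⟨hs.1.1, hsd⟩).not_ge hs.2
  have hu : 0 < u := ha.trans_lt hau
  have hVu : x ≤ V u := by
    by_contra! hVu
    obtain ⟨d, hud, hd⟩ := mem_nhdsGE_iff_exists_Ico_subset.1
      ((hV.continuousWithinAt_Ici u hu.le).eventually_lt_const hVu)
    obtain ⟨s, hs, hsd⟩ := exists_lt_of_csInf_lt ⟨b, hbA⟩ hud
    exact (hd ⟨csInf_le hA hs, hsd⟩).not_ge hs.2
  have hVmu : Vm u ≤ x := by
    refine le_of_tendsto (hV.tendsto_nhdsLT u hu) ?_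
    filter_upwards [Ioo_mem_nhdsLT hau] with s hs
    by_contra! hxs
    exact notMem_of_lt_csInf hs.2 hA ⟨⟨hs.1.le, hs.2.le.trans hub⟩, hxs.le⟩
  refine ⟨u, ⟨hau, hub⟩, hu, ?_⟩
  rcases hVu.eq_or_lt with hVu | hVu
  · exact .inr (.inr hVu.symm)
  · exact .inl ⟨hVmu.lt_of_ne fun h => hVu.ne' (hjump u hu h), hVu⟩

lemma exists_mem_crossingSet_Ioc_of_gt_of_ge (hV : IsCadlag V Vm)
    (hjump : ∀ u > 0, Vm u = x → V u = x) {a b : ℝ} (ha : 0 ≤ a) (hab : a < b)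
    (hVa : x < V a) (hVb : V b ≤ x) : ∃ u ∈ Ioc a b, u ∈ crossingSet V Vm x := by
  simpa only [crossingSet_neg] using exists_mem_crossingSet_Ioc_of_lt_of_le hV.neg
    (fun u hu h => neg_inj.2 (hjump u hu (neg_inj.1 h))) ha hab (neg_lt_neg hVa) (neg_le_neg hVb)

lemma sign_sub_eq_of_crossingSet_inter_Ioc_eq_empty (hV : IsCadlag V Vm)
    (hjump : ∀ u > 0, Vm u = x → V u = x) {a b : ℝ} (ha : 0 ≤ a) (hab : a ≤ b) (hVa : V a ≠ x)
    (h : crossingSet V Vm x ∩ Ioc a b = ∅) : sign (V b - x) = sign (V a - x) := by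
  rcases hab.eq_or_lt with rfl | hab
  · rfl
  have hS : ∀ u ∈ Ioc a b, u ∉ crossingSet V Vm x := fun u hu hS => h.subset ⟨hS, hu⟩
  rcases hVa.lt_or_gt with hVa | hVa
  · have hVb : V b < x := not_le.1 fun hVb =>
      let ⟨u, hu, huS⟩ := exists_mem_crossingSet_Ioc_of_lt_of_le hV hjump ha hab hVa hVb
      hS u hu huS
    rw [sign_neg (sub_neg.2 hVb), sign_neg (sub_neg.2 hVa)]
  · have hVb : x < V b := not_le.1 fun hVb =>
      let ⟨u, hu, huS⟩ := exists_mem_crossingSet_Ioc_of_gt_of_ge hV hjump ha hab hVa hVb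
      hS u hu huS
    rw [sign_pos (sub_pos.2 hVb), sign_pos (sub_pos.2 hVa)]

lemma increasesThrough_iff (hu : 0 < u) (hVu : V u = x)
    (hcont : ContinuousWithinAt V (Ici 0) u) :
    IncreasesThrough V x u ↔ (∀ᶠ s in 𝓝[<] u, V s < x) ∧ ∀ᶠ s in 𝓝[>] u, x < V s := by
  subst hVu
  constructor
  · rintro ⟨-, -, -, ε, hε, hsign⟩
    have hball : ∀ᶠ s in 𝓝 u, 0 ≤ s ∧ |s - u| < ε :=
      (eventually_ge_nhds hu).and (Metric.ball_mem_nhds u hε)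
    exact ⟨by filter_upwards [nhdsWithin_le_nhds hball, self_mem_nhdsWithin] with s hs hsu
        using (hsign s hs.1 hs.2).1 hsu,
      by filter_upwards [nhdsWithin_le_nhds hball, self_mem_nhdsWithin] with s hs hsu
        using (hsign s hs.1 hs.2).2 hsu⟩
  · rintro ⟨hl, hr⟩
    have hne : ∀ᶠ s in 𝓝[≠] u, (s < u → V s < V u) ∧ (u < s → V u < V s) := by
      rw [← nhdsLT_sup_nhdsGT, eventually_sup]
      exact ⟨by filter_upwards [hl, self_mem_nhdsWithin] with s hs hsu
          using ⟨fun _ => hs, fun h => (hsu.not_gt h).elim⟩,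
        by filter_upwards [hr, self_mem_nhdsWithin] with s hs hsu
          using ⟨fun h => (hsu.not_gt h).elim, fun _ => hs⟩⟩
    obtain ⟨ε, hε, hball⟩ := Metric.eventually_nhds_iff.1 (eventually_nhdsWithin_iff.1 hne)
    exact ⟨hu, rfl, hcont, ε, hε, fun s _ hs =>
      ⟨fun h => (hball (by rwa [Real.dist_eq]) h.ne).1 h,
        fun h => (hball (by rwa [Real.dist_eq]) h.ne').2 h⟩⟩

lemma decreasesThrough_iff (hu : 0 < u) (hVu : V u = x)
    (hcont : ContinuousWithinAt V (Ici 0) u) :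
    DecreasesThrough V x u ↔ (∀ᶠ s in 𝓝[<] u, x < V s) ∧ ∀ᶠ s in 𝓝[>] u, V s < x := by
  simp only [DecreasesThrough, neg_lt_neg_iff,
    increasesThrough_iff (V := fun s => -V s) hu (congrArg Neg.neg hVu) hcont.neg]

lemma passageSign_eq_of_eventually_sign (hu : 0 < u) (hVu : V u = x)
    (hcont : ContinuousWithinAt V (Ici 0) u) {σl σr : SignType} (hσl : σl ≠ 0) (hσr : σr ≠ 0)
    (hl : ∀ᶠ s in 𝓝[<] u, sign (V s - x) = σl) (hr : ∀ᶠ s in 𝓝[>] u, sign (V s - x) = σr) :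
    passageSign V x u = (σr - σl) / 2 := by
  have side : ∀ {l : Filter ℝ} [l.NeBot] {σ : SignType} (τ : SignType),
      (∀ᶠ s in l, sign (V s - x) = σ) → ((∀ᶠ s in l, sign (V s - x) = τ) ↔ σ = τ) :=
    fun τ hσ => ⟨fun hτ => let ⟨_, hs⟩ := (hσ.and hτ).exists; hs.1.symm.trans hs.2,
      fun h => h ▸ hσ⟩
  have hI : IncreasesThrough V x u ↔ σl = -1 ∧ σr = 1 := by
    simp only [increasesThrough_iff hu hVu hcont, ← side _ hl, ← side _ hr, sign_eq_neg_one_iff,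
      sign_eq_one_iff, sub_neg, sub_pos]
  have hD : DecreasesThrough V x u ↔ σl = 1 ∧ σr = -1 := by
    simp only [decreasesThrough_iff hu hVu hcont, ← side _ hl, ← side _ hr, sign_eq_neg_one_iff,
      sign_eq_one_iff, sub_neg, sub_pos]
  classical
  simp only [passageSign, indicator_apply, mem_ofPred_eq, hI, hD]
  cases σl <;> cases σr <;> norm_num at *

lemma crossingWeight_eq_heaviside_sub (hV : IsCadlag V Vm)
    (hx : SimpleLevel V Vm x) {c b : ℝ} (hc : 0 ≤ c) (hcu : c < u) (hub : u ≤ b)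
    (hS : crossingSet V Vm x ∩ Ioc c b = {u}) (hVc : V c ≠ x) (hVb : V b ≠ x) :
    crossingWeight V Vm x u = heaviside x (V b) - heaviside x (V c) := by
  have hu : 0 < u := hc.trans_lt hcu
  have hjump : ∀ v > 0, Vm v = x → V v = x := fun v hv => (hx.leftLim_eq_iff hv).1
  have hempty : ∀ a' b', c ≤ a' → b' ≤ b → u ∉ Ioc a' b' →
      crossingSet V Vm x ∩ Ioc a' b' = ∅ := fun a' b' ha' hb' hu' =>
    eq_empty_of_forall_notMem fun v hv => by
      have : v = u := hS.subset ⟨hv.1, ha'.trans_lt hv.2.1, hv.2.2.trans hb'⟩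
      exact hu' (this ▸ hv.2)
  have hleft : ∀ᶠ s in 𝓝[<] u, sign (V s - x) = sign (V c - x) := by
    filter_upwards [Ioo_mem_nhdsLT hcu] with s hs
    exact sign_sub_eq_of_crossingSet_inter_Ioc_eq_empty hV hjump hc hs.1.le hVc
      (hempty c s le_rfl (hs.2.le.trans hub) fun h => h.2.not_gt hs.2)
  rw [heaviside_eq_of_ne hVb, heaviside_eq_of_ne hVc]
  by_cases hVu : V u = x
  · -- `V` is continuous at `u` and the side of `x` may or may not change there
    have hVmu : Vm u = x := (hx.leftLim_eq_iff hu).2 hVu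
    have hub' : u < b := hub.lt_of_ne (by rintro rfl; exact hVb hVu)
    have hright : ∀ᶠ s in 𝓝[>] u, sign (V s - x) = sign (V b - x) := by
      filter_upwards [Ioc_mem_nhdsGT hub'] with s hs
      have hs0 : 0 < s := hu.trans hs.1
      have hVs : V s ≠ x := ne_of_notMem_crossingSet hs0 fun hsS =>
        hs.1.ne' (hS.subset ⟨hsS, hcu.trans hs.1, hs.2⟩)
      exact (sign_sub_eq_of_crossingSet_inter_Ioc_eq_empty hV hjump hs0.le hs.2 hVs
        (hempty s b (hcu.trans hs.1).le le_rfl fun h => h.1.not_gt hs.1)).symm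
    have hcont : ContinuousWithinAt V (Ici 0) u :=
      (hV.continuousAt hu (hVmu.trans hVu.symm)).continuousWithinAt
    rw [crossingWeight, passageSign_eq_of_eventually_sign hu hVu hcont
      (sign_ne_zero.2 (sub_ne_zero.2 hVc)) (sign_ne_zero.2 (sub_ne_zero.2 hVb)) hleft hright,
      hVu, hVmu]
    ring
  · -- `V` jumps over `x` at `u`
    have hVmu : Vm u ≠ x := mt (hx.leftLim_eq_iff hu).1 hVu
    have hright : sign (V b - x) = sign (V u - x) :=
      sign_sub_eq_of_crossingSet_inter_Ioc_eq_empty hV hjump hu.le hub hVu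
        (hempty u b hcu.le le_rfl fun h => h.1.false)
    have hlim : sign (Vm u - x) = sign (V c - x) :=
      tendsto_nhds_unique
        ((continuousAt_sign_of_ne_zero (sub_ne_zero.2 hVmu)).tendsto.comp
          ((hV.tendsto_nhdsLT u hu).sub_const x))
        (tendsto_const_nhds.congr' (hleft.mono fun _ h => h.symm))
    rw [crossingWeight, passageSign_eq_zero_of_ne hVu, heaviside_eq_of_ne hVu,
      heaviside_eq_of_ne hVmu, hright, hlim]
    ring

theorem heaviside_eq_add_finsum_crossingWeight (hV : IsCadlag V Vm) (hx : SimpleLevel V Vm x)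
    {a b : ℝ} (ha : 0 ≤ a) (hab : a ≤ b) (hVa : V a ≠ x) (hVb : V b ≠ x) :
    heaviside x (V b) =
      heaviside x (V a) + ∑ᶠ u ∈ crossingSet V Vm x ∩ Ioc a b, crossingWeight V Vm x u := by
  obtain ⟨F, hF⟩ := (hx.finite_inter_Ioc a b).exists_finset_coe
  induction F using Finset.induction_on_max generalizing b with
  | empty =>
    rw [← hF, Finset.coe_empty, finsum_mem_empty, add_zero, heaviside_eq_of_ne hVa,
      heaviside_eq_of_ne hVb, sign_sub_eq_of_crossingSet_inter_Ioc_eq_empty hV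
        (fun v hv => (hx.leftLim_eq_iff hv).1) ha hab hVa (by simpa using hF.symm)]
  | insert u F hlt ih =>
    -- split `(a, b]` at a point `c` between the last crossing time `u` and the earlier ones
    have huS : u ∈ crossingSet V Vm x ∩ Ioc a b := by simp [← hF]
    obtain ⟨c, hmc, hcu⟩ := exists_between ((insert a F).max'_lt_iff (by simp) |>.2
      (by simpa using ⟨huS.2.1, hlt⟩))
    have hac : a < c := (Finset.le_max' _ a (by simp)).trans_lt hmc
    have hFc : ∀ v ∈ F, v < c := fun v hv => (Finset.le_max' _ v (by simp [hv])).trans_lt hmc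
    have hmem : ∀ v, v ∈ crossingSet V Vm x ∩ Ioc a b ↔ v = u ∨ v ∈ F := fun v => by
      rw [← hF, Finset.coe_insert, mem_insert_iff, Finset.mem_coe]
    have hcb : c ≤ b := hcu.le.trans huS.2.2
    have hSc : ↑F = crossingSet V Vm x ∩ Ioc a c := by
      ext v
      refine ⟨fun hv => ?_, fun hv => ?_⟩
      · have hv' := (hmem v).2 (.inr hv)
        exact ⟨hv'.1, hv'.2.1, (hFc v hv).le⟩
      · exact ((hmem v).1 ⟨hv.1, hv.2.1, hv.2.2.trans hcb⟩).resolve_left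
          (hv.2.2.trans_lt hcu).ne
    have hScb : crossingSet V Vm x ∩ Ioc c b = {u} := by
      ext v
      refine ⟨fun hv => ?_, fun hv => ?_⟩
      · exact ((hmem v).1 ⟨hv.1, hac.trans hv.2.1, hv.2.2⟩).resolve_right
          fun hvF => (hFc v hvF).not_gt hv.2.1
      · exact hv ▸ ⟨huS.1, hcu, huS.2.2⟩
    have hVc : V c ≠ x := ne_of_notMem_crossingSet (Vm := Vm) (ha.trans_lt hac) fun hcS =>
      ((hmem c).1 ⟨hcS, hac, hcb⟩).elim hcu.ne fun hcF => (hFc c hcF).false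
    rw [← hF, Finset.coe_insert, finsum_mem_insert _ (fun h => (hlt u h).false) F.finite_toSet,
      hSc, crossingWeight_eq_heaviside_sub hV hx (ha.trans hac.le) hcu
        huS.2.2 hScb hVc hVb]
    linarith [ih hac.le hVc hSc]

lemma heaviside_eq_of_notMem_crossingSet (hx : SimpleLevel V Vm x) (hu : 0 < u)
    (h : u ∉ crossingSet V Vm x) : heaviside x (V u) = heaviside x (Vm u) := by
  have hVu : V u ≠ x := ne_of_notMem_crossingSet hu h
  have hVmu : Vm u ≠ x := mt (hx.leftLim_eq_iff hu).1 hVu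
  rcases hVu.lt_or_gt with hVu | hVu <;> rcases hVmu.lt_or_gt with hVmu | hVmu
  · simp [heaviside, hVu.not_ge, hVmu.not_ge]
  · exact absurd ⟨hu, .inr (.inl ⟨hVu, hVmu⟩)⟩ h
  · exact absurd ⟨hu, .inl ⟨hVmu, hVu⟩⟩ h
  · simp [heaviside, hVu.le, hVmu.le]

lemma ncard_inter_eq_finsum_indicator {α : Type*} {B : Set α} (hB : B.Finite) (P : Set α) :
    ((B ∩ P).ncard : ℝ) = ∑ᶠ u ∈ B, P.indicator 1 u := by
  rw [finsum_mem_def, indicator_indicator, ← finsum_mem_def, ← finsum_one,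
    Nat.cast_finsum_mem (hB.inter_of_left P)]
  simp

lemma signedLocalTime_eq_finsum {t : ℝ} (hS : (crossingSet V Vm x ∩ Ioc 0 t).Finite) :
    (signedLocalTime V x t : ℝ) = ∑ᶠ u ∈ crossingSet V Vm x ∩ Ioc 0 t, passageSign V x u := by
  have hinc : incSet V x t = crossingSet V Vm x ∩ Ioc 0 t ∩ {s | IncreasesThrough V x s} :=
    ext fun s => ⟨fun h => ⟨⟨h.2.mem_crossingSet, h.1⟩, h.2⟩, fun h => ⟨h.1.2, h.2⟩⟩
  have hdec : decSet V x t = crossingSet V Vm x ∩ Ioc 0 t ∩ {s | DecreasesThrough V x s} :=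
    ext fun s => ⟨fun h => ⟨⟨h.2.mem_crossingSet, h.1⟩, h.2⟩, fun h => ⟨h.1.2, h.2⟩⟩
  rw [signedLocalTime, Int.cast_sub, Int.cast_natCast, Int.cast_natCast, hinc, hdec,
    ncard_inter_eq_finsum_indicator hS, ncard_inter_eq_finsum_indicator hS]
  exact (finsum_mem_sub_distrib _ _ hS).symm

lemma tsum_heaviside_sub_eq_finsum (hx : SimpleLevel V Vm x) (t : ℝ) :
    ∑' s : Ioc (0 : ℝ) t, (heaviside x (V s) - heaviside x (Vm s)) =
      ∑ᶠ u ∈ crossingSet V Vm x ∩ Ioc 0 t, (heaviside x (V u) - heaviside x (Vm u)) := by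
  have hsupp : ∀ u ∈ Ioc 0 t, heaviside x (V u) - heaviside x (Vm u) ≠ 0 →
      u ∈ crossingSet V Vm x := fun u hu h =>
    by_contra fun huS => h (sub_eq_zero.2 (heaviside_eq_of_notMem_crossingSet hx hu.1 huS))
  rw [tsum_subtype (Ioc 0 t) fun u => heaviside x (V u) - heaviside x (Vm u), tsum_eq_finsum,
    ← finsum_mem_def]
  · exact finsum_mem_inter_support_eq' _ _ _ fun u hu =>
      ⟨fun h => ⟨hsupp u h hu, h⟩, fun h => h.2⟩
  · refine (hx.finite_inter_Ioc 0 t).subset fun u hu => ?_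
    rw [Function.mem_support, indicator_apply_ne_zero] at hu
    exact ⟨hsupp u hu.1 hu.2, hu.1⟩

end

theorem tanaka_formula_Ici_general
    (V Vm : ℝ → ℝ)
    (hV_rc : ∀ s ∈ Set.Ici (0 : ℝ), ContinuousWithinAt V (Set.Ici s) s)
    (hV_ll : ∀ s ∈ Set.Ioi (0 : ℝ),
      Filter.Tendsto V (nhdsWithin s (Set.Iio s)) (nhds (Vm s)))
    (t : ℝ) (ht : 0 < t)
    (x : ℝ) (hx : SimpleLevel V Vm x) (hx0 : x ≠ V 0) (hxt : x ≠ V t) :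
    {s : ℝ | s ∈ Set.Ioc (0 : ℝ) t ∧
        (Set.Ici x).indicator (fun _ => (1 : ℝ)) (V s) ≠
          (Set.Ici x).indicator (fun _ => (1 : ℝ)) (Vm s)}.Finite ∧
      (Set.Ici x).indicator (fun _ => (1 : ℝ)) (V t) =
        (Set.Ici x).indicator (fun _ => (1 : ℝ)) (V 0) + (signedLocalTime V x t : ℝ) +
          ∑' s : Set.Ioc (0 : ℝ) t,
            ((Set.Ici x).indicator (fun _ => (1 : ℝ)) (V s.1) -
              (Set.Ici x).indicator (fun _ => (1 : ℝ)) (Vm s.1)) := by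
  have hS := hx.finite_inter_Ioc 0 t
  refine ⟨hS.subset fun s hs => ⟨by_contra fun hsS =>
    hs.2 (heaviside_eq_of_notMem_crossingSet hx hs.1.1 hsS), hs.1⟩, ?_⟩
  change heaviside x (V t) = heaviside x (V 0) + _ +
    ∑' s : Ioc (0 : ℝ) t, (heaviside x (V s) - heaviside x (Vm s))
  rw [tsum_heaviside_sub_eq_finsum hx, signedLocalTime_eq_finsum hS, add_assoc,
    ← finsum_mem_add_distrib hS]
  exact heaviside_eq_add_finsum_crossingWeight ⟨hV_rc, hV_ll⟩ hx le_rfl ht.le hx0.symm hxt.symm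

/-- deterministic Meyer–Tanaka formula. Let `V` be càdlàg on `[0,∞)` with
finite variation on compacts, `t > 0`, and let `x` be a simple level for `V` with
`x ≠ V 0` and `x ≠ V t`. Then
`1_{[x,∞)}(V t) = 1_{[x,∞)}(V 0) + ℓ^x(t) + Σ_{0<s≤t} (1_{[x,∞)}(V s) − 1_{[x,∞)}(V s−))`,
the sum having only finitely many nonzero terms. -/
theorem tanaka_formula_Ici
    (V Vm : ℝ → ℝ)
    (hV_rc : ∀ s ∈ Set.Ici (0 : ℝ), ContinuousWithinAt V (Set.Ici s) s)
    (hV_ll : ∀ s ∈ Set.Ioi (0 : ℝ),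
      Filter.Tendsto V (nhdsWithin s (Set.Iio s)) (nhds (Vm s)))
    (hV_bv : ∀ T : ℝ, BoundedVariationOn V (Set.Icc 0 T))
    (t : ℝ) (ht : 0 < t)
    (x : ℝ) (hx : SimpleLevel V Vm x) (hx0 : x ≠ V 0) (hxt : x ≠ V t) :
    {s : ℝ | s ∈ Set.Ioc (0 : ℝ) t ∧
        (Set.Ici x).indicator (fun _ => (1 : ℝ)) (V s) ≠
          (Set.Ici x).indicator (fun _ => (1 : ℝ)) (Vm s)}.Finite ∧
      (Set.Ici x).indicator (fun _ => (1 : ℝ)) (V t) =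
        (Set.Ici x).indicator (fun _ => (1 : ℝ)) (V 0) + (signedLocalTime V x t : ℝ) +
          ∑' s : Set.Ioc (0 : ℝ) t,
            ((Set.Ici x).indicator (fun _ => (1 : ℝ)) (V s.1) -
              (Set.Ici x).indicator (fun _ => (1 : ℝ)) (Vm s.1)) :=
  tanaka_formula_Ici_general V Vm hV_rc hV_ll t ht x hx hx0 hxt
end
end
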